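/- arXiv:1809.04140 — 9 statements merged into one kernel-verified Lean document; each statement's English description precedes it below -/
import Mathlib

section
/- Let P and Q be probability measures on a common measurable space with P absolutely continuous with respect to Q, and let h be a nonnegative measurable function proportional to the density dP/dQ, i.e. dP/dQ = h / ∫ h dQ with 0 < ∫ h dQ < ∞. If ∫ |h(x) − 1| dQ(x) ≤ δ for some δ ∈ (0,1), then TV(P, Q) ≤ δ/(1 − δ). -/
open MeasureTheory

/-- Total variation distance between two measures: the supremum over measurable
sets `D` of `|P D - Q D|`. -/
noncomputable def tvDist {Ω : Type*} [MeasurableSpace Ω] (P Q : Measure Ω) : ℝ :=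
  ⨆ D : {s : Set Ω // MeasurableSet s}, |(P D).toReal - (Q D).toReal|

/-
Writing `Z = ∫ h dQ`, the density gives `P(D) - Q(D) = (1/Z) ∫_D (h - Z) dQ`. Since `h - Z` has
`Q`-integral zero, its integral over `D` is minus its integral over `Dᶜ`, so
`|∫_D (h - Z) dQ| ≤ (1/2) ∫ |h - Z| dQ`. The triangle inequality through the constant `1` gives
`|Z - 1| ≤ δ` and `∫ |h - Z| dQ ≤ 2δ`; hence `Z ≥ 1 - δ` and `|P(D) - Q(D)| ≤ δ / (1 - δ)`.
-/

section

variable {Ω : Type*} [MeasurableSpace Ω] {μ : Measure Ω} {f : Ω → ℝ}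

lemma integral_sub_const_of_isProbabilityMeasure [IsProbabilityMeasure μ]
    (hf : Integrable f μ) (c : ℝ) : ∫ x, (f x - c) ∂μ = ∫ x, f x ∂μ - c := by
  simp [integral_sub hf (integrable_const c)]

lemma abs_integral_sub_le_integral_abs_sub [IsProbabilityMeasure μ]
    (hf : Integrable f μ) (c : ℝ) : |∫ x, f x ∂μ - c| ≤ ∫ x, |f x - c| ∂μ := by
  rw [← integral_sub_const_of_isProbabilityMeasure hf c]
  exact abs_integral_le_integral_abs

lemma integral_abs_sub_integral_le [IsProbabilityMeasure μ]
    (hf : Integrable f μ) (c : ℝ) :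
    ∫ x, |f x - ∫ y, f y ∂μ| ∂μ ≤ 2 * ∫ x, |f x - c| ∂μ := by
  set m := ∫ y, f y ∂μ
  have hfc : Integrable (fun x => |f x - c|) μ := (hf.sub (integrable_const c)).abs
  calc ∫ x, |f x - m| ∂μ ≤ ∫ x, (|f x - c| + |m - c|) ∂μ := by
        refine integral_mono (hf.sub (integrable_const m)).abs (hfc.add (integrable_const _))
          fun x => ?_
        rw [abs_sub_comm m c]
        exact abs_sub_le (f x) c m
    _ = ∫ x, |f x - c| ∂μ + |m - c| := by simp [integral_add hfc (integrable_const _)]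
    _ ≤ 2 * ∫ x, |f x - c| ∂μ := by
        linarith [abs_integral_sub_le_integral_abs_sub hf c]

lemma abs_setIntegral_le_half_integral_abs (hf : Integrable f μ) (hf0 : ∫ x, f x ∂μ = 0)
    {s : Set Ω} (hs : MeasurableSet s) :
    |∫ x in s, f x ∂μ| ≤ (∫ x, |f x| ∂μ) / 2 := by
  have hsplit := integral_add_compl hs hf
  have habs := integral_add_compl hs hf.abs
  have hcompl : |∫ x in s, f x ∂μ| = |∫ x in sᶜ, f x ∂μ| := by
    rw [← abs_neg, show -∫ x in s, f x ∂μ = ∫ x in sᶜ, f x ∂μ by linarith]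
  have hs_le : |∫ x in s, f x ∂μ| ≤ ∫ x in s, |f x| ∂μ := abs_integral_le_integral_abs
  have hsc_le : |∫ x in sᶜ, f x ∂μ| ≤ ∫ x in sᶜ, |f x| ∂μ := abs_integral_le_integral_abs
  linarith

end

lemma toReal_sub_toReal_eq_setIntegral_div {Ω : Type*} [MeasurableSpace Ω] {P Q : Measure Ω}
    [IsFiniteMeasure Q] {h : Ω → ℝ} (hint : Integrable h Q)
    (hdens : ∀ s : Set Ω, MeasurableSet s →
      (P s).toReal = (∫ x in s, h x ∂Q) / ∫ x, h x ∂Q)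
    (hZ : ∫ x, h x ∂Q ≠ 0) {D : Set Ω} (hD : MeasurableSet D) :
    (P D).toReal - (Q D).toReal =
      (∫ x in D, (h x - ∫ y, h y ∂Q) ∂Q) / ∫ x, h x ∂Q := by
  rw [hdens D hD, integral_sub hint.restrict (integrable_const _), setIntegral_const,
    smul_eq_mul, Measure.real]
  field_simp

theorem tv_le_of_density_close_general {Ω : Type*} [MeasurableSpace Ω] (P Q : Measure Ω)
    [IsProbabilityMeasure Q] (h : Ω → ℝ) (hint : Integrable h Q)
    (hdens : ∀ s : Set Ω, MeasurableSet s →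
      (P s).toReal = (∫ x in s, h x ∂Q) / ∫ x, h x ∂Q)
    (δ : ℝ) (hδ0 : 0 < δ) (hδ1 : δ < 1)
    (hclose : ∫ x, |h x - 1| ∂Q ≤ δ) :
    tvDist P Q ≤ δ / (1 - δ) := by
  set Z := ∫ x, h x ∂Q
  have hZ : 1 - δ ≤ Z := by
    linarith [(abs_le.mp (abs_integral_sub_le_integral_abs_sub hint 1)).1]
  have hdev : ∫ x, |h x - Z| ∂Q ≤ 2 * δ := by
    linarith [integral_abs_sub_integral_le hint 1]
  have hmean : ∫ x, (h x - Z) ∂Q = 0 := by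
    rw [integral_sub_const_of_isProbabilityMeasure hint, sub_self]
  refine ciSup_le fun ⟨D, hD⟩ => ?_
  have hI : |∫ x in D, (h x - Z) ∂Q| ≤ δ :=
    calc _ ≤ (∫ x, |h x - Z| ∂Q) / 2 :=
          abs_setIntegral_le_half_integral_abs (hint.sub (integrable_const Z)) hmean hD
      _ ≤ δ := by linarith
  have hPD : (P D).toReal - (Q D).toReal = (∫ x in D, (h x - Z) ∂Q) / Z :=
    toReal_sub_toReal_eq_setIntegral_div hint hdens (by linarith) hD
  rw [hPD, abs_div, abs_of_pos (a := Z) (by linarith)]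
  exact div_le_div₀ hδ0.le hI (by linarith) hZ

/-- If `P ≪ Q` with density proportional to `h`, i.e. `P(s) = ∫_s h dQ / ∫ h dQ`, and
`∫ |h - 1| dQ ≤ δ` for some `δ ∈ (0,1)`, then `TV(P,Q) ≤ δ / (1 - δ)`. -/
theorem tv_le_of_density_close {Ω : Type*} [MeasurableSpace Ω] (P Q : Measure Ω)
    [IsProbabilityMeasure P] [IsProbabilityMeasure Q] (hPQ : P ≪ Q)
    (h : Ω → ℝ) (hmeas : Measurable h) (hnonneg : ∀ x, 0 ≤ h x)
    (hint : Integrable h Q) (hpos : 0 < ∫ x, h x ∂Q)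
    (hdens : ∀ s : Set Ω, MeasurableSet s →
      (P s).toReal = (∫ x in s, h x ∂Q) / ∫ x, h x ∂Q)
    (δ : ℝ) (hδ0 : 0 < δ) (hδ1 : δ < 1)
    (hclose : ∫ x, |h x - 1| ∂Q ≤ δ) :
    tvDist P Q ≤ δ / (1 - δ) :=
  tv_le_of_density_close_general P Q h hint hdens δ hδ0 hδ1 hclose
end

section
/- Let M ≥ 1 be an integer and let Z_1, …, Z_M be real random variables on a common probability space such that each Z_k has the Gamma(2,1) distribution (no independence is assumed). Then for every t ≥ 0, P( max_{k=1,…,M} Z_k ≥ log M + log log(eM) + t ) ≤ (2 + t) e^{−t}. -/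
/-!
Each `Z_k` has tail `P(Z_k ≥ c) = (1 + c) e^{-c}`, so the union bound gives
`P(max_k Z_k ≥ c) ≤ M (1 + c) e^{-c}`. At `c = log M + log L + t` with `L = log (e M) = 1 + log M`
this equals `(L + log L + t) e^{-t} / L`, and `log L ≤ L - 1`, `L ≥ 1` bound it by `(2 + t) e^{-t}`.
-/

open MeasureTheory ProbabilityTheory Real Set Filter Topology

noncomputable section

def gammaTwoTail (x : ℝ) : ℝ := (1 + x) * exp (-x)

lemma hasDerivAt_gammaTwoTail (x : ℝ) : HasDerivAt gammaTwoTail (-(x * exp (-x))) x :=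
  (((hasDerivAt_id' x).const_add 1).mul (hasDerivAt_neg x).exp).congr_deriv (by ring)

lemma hasDerivAt_neg_gammaTwoTail_mul (r x : ℝ) :
    HasDerivAt (fun y => -gammaTwoTail (r * y)) (r ^ 2 * x * exp (-(r * x))) x :=
  ((hasDerivAt_gammaTwoTail (r * x)).comp x ((hasDerivAt_id' x).const_mul r)).neg.congr_deriv
    (by ring)

lemma tendsto_gammaTwoTail_atTop : Tendsto gammaTwoTail atTop (𝓝 0) := by
  have h := tendsto_exp_neg_atTop_nhds_zero.add (tendsto_pow_mul_exp_neg_atTop_nhds_zero 1)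
  rw [add_zero] at h
  exact h.congr fun x => by simp [gammaTwoTail]; ring

lemma gammaMeasure_two_Ici {r c : ℝ} (hr : 0 < r) (hc : 0 ≤ c) :
    gammaMeasure 2 r (Ici c) = ENNReal.ofReal (gammaTwoTail (r * c)) := by
  have hderiv : ∀ x ∈ Ici c, HasDerivAt (fun y => -gammaTwoTail (r * y))
      (r ^ 2 * x * exp (-(r * x))) x := fun x _ => hasDerivAt_neg_gammaTwoTail_mul r x
  have hnonneg : ∀ x ∈ Ioi c, 0 ≤ r ^ 2 * x * exp (-(r * x)) := fun x hx => by
    have : 0 ≤ x := hc.trans hx.out.le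
    positivity
  have hlim : Tendsto (fun y => -gammaTwoTail (r * y)) atTop (𝓝 0) := by
    simpa using (tendsto_gammaTwoTail_atTop.comp (tendsto_id.const_mul_atTop hr)).neg
  have hpdf : ∀ x ∈ Ioi c, gammaPDF 2 r x = ENNReal.ofReal (r ^ 2 * x * exp (-(r * x))) := by
    intro x hx
    rw [gammaPDF_of_nonneg (hc.trans hx.out.le)]
    norm_num [Gamma_two]
  rw [gammaMeasure, withDensity_apply _ measurableSet_Ici, ← setLIntegral_congr Ioi_ae_eq_Ici,
    setLIntegral_congr_fun measurableSet_Ioi hpdf,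
    ← ofReal_integral_eq_lintegral_ofReal (integrableOn_Ioi_deriv_of_nonneg' hderiv hnonneg hlim)
      ((ae_restrict_iff' measurableSet_Ioi).mpr (ae_of_all _ hnonneg)),
    integral_Ioi_of_hasDerivAt_of_nonneg' hderiv hnonneg hlim]
  simp

lemma measure_le_sup'_le_sum_measure {Ω ι α : Type*} [MeasurableSpace Ω] [LinearOrder α]
    (μ : Measure Ω) {s : Finset ι} (hs : s.Nonempty) (Z : ι → Ω → α) (c : α) :
    μ {ω | c ≤ s.sup' hs (fun k => Z k ω)} ≤ ∑ k ∈ s, μ {ω | c ≤ Z k ω} :=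
  calc μ {ω | c ≤ s.sup' hs (fun k => Z k ω)} ≤ μ (⋃ k ∈ s, {ω | c ≤ Z k ω}) :=
        measure_mono fun ω hω => by simpa [Finset.le_sup'_iff] using hω
    _ ≤ ∑ k ∈ s, μ {ω | c ≤ Z k ω} := measure_biUnion_finset_le s _

/-- `hν` replaces measurability of `X`: `Measure.map` along a non-a.e.-measurable map is `0`. -/
lemma measure_preimage_eq_of_map_eq {Ω α : Type*} [MeasurableSpace Ω] [MeasurableSpace α]
    {μ : Measure Ω} {ν : Measure α} {X : Ω → α} (h : μ.map X = ν) (hν : ν ≠ 0)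
    {s : Set α} (hs : MeasurableSet s) : μ (X ⁻¹' s) = ν s := by
  have hX : AEMeasurable X μ := .of_map_ne_zero (h ▸ hν)
  rw [← h, Measure.map_apply_of_aemeasurable hX hs]

lemma one_le_log_exp_one_mul {M : ℝ} (hM : 1 ≤ M) : 1 ≤ log (exp 1 * M) := by
  rw [log_mul (exp_pos 1).ne' (by positivity), log_exp]
  linarith [log_nonneg hM]

lemma mul_gammaTwoTail_log_add_log_log_add_le {M t : ℝ} (hM : 1 ≤ M) (ht : 0 ≤ t) :
    M * gammaTwoTail (log M + log (log (exp 1 * M)) + t) ≤ (2 + t) * exp (-t) := by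
  set L := log (exp 1 * M) with hL
  have hL₁ : 1 ≤ L := one_le_log_exp_one_mul hM
  have hLM : L = 1 + log M := by rw [hL, log_mul (exp_pos 1).ne' (by positivity), log_exp]
  have hexp : M * exp (-(log M + log L + t)) = exp (-t) / L := by
    rw [neg_add, neg_add, exp_add, exp_add, exp_neg, exp_neg, exp_log (by positivity),
      exp_log (by positivity)]
    field_simp
  have hnum : 1 + (log M + log L + t) ≤ (2 + t) * L := by
    nlinarith [log_le_sub_one_of_pos (zero_lt_one.trans_le hL₁)]
  calc M * gammaTwoTail (log M + log L + t)
        = (1 + (log M + log L + t)) / L * exp (-t) := by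
          rw [gammaTwoTail, div_mul_eq_mul_div, mul_div_assoc, ← hexp]; ring
    _ ≤ (2 + t) * exp (-t) := by
          gcongr
          exact (div_le_iff₀ (by positivity)).mpr hnum

/-- If `Z_1, …, Z_M` (`M ≥ 1`) are real random variables, each `Γ(2,1)`-distributed
(no independence assumed), then for every `t ≥ 0`,
`P(max_k Z_k ≥ log M + log log (e M) + t) ≤ (2 + t) e^{-t}`. -/
theorem max_gamma_tail_bound {Ω : Type*} [MeasurableSpace Ω] (P : Measure Ω) (M : ℕ)
    (hM : 1 ≤ M) (Z : Fin M → Ω → ℝ) (hgamma : ∀ k, Measure.map (Z k) P = gammaMeasure 2 1)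
    (t : ℝ) (ht : 0 ≤ t) :
    P {ω | Real.log M + Real.log (Real.log (Real.exp 1 * M)) + t ≤
        Finset.univ.sup' (Finset.univ_nonempty_iff.mpr
          (Fin.pos_iff_nonempty.mp (by omega))) (fun k => Z k ω)}
      ≤ ENNReal.ofReal ((2 + t) * Real.exp (-t)) := by
  have hM₁ : (1 : ℝ) ≤ M := by exact_mod_cast hM
  set c := log M + log (log (exp 1 * M)) + t
  have hc : 0 ≤ c := by
    have := log_nonneg (one_le_log_exp_one_mul hM₁)
    have := log_nonneg hM₁
    positivity
  have hγ : gammaMeasure 2 1 ≠ 0 :=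
    (isProbabilityMeasure_gammaMeasure two_pos one_pos).ne_zero
  have htail : ∀ k, P {ω | c ≤ Z k ω} = ENNReal.ofReal (gammaTwoTail c) := fun k => by
    rw [← one_mul c, ← gammaMeasure_two_Ici one_pos hc, one_mul]
    exact measure_preimage_eq_of_map_eq (hgamma k) hγ measurableSet_Ici
  calc _ ≤ ∑ k, P {ω | c ≤ Z k ω} := measure_le_sup'_le_sum_measure P _ Z c
    _ = ENNReal.ofReal (M * gammaTwoTail c) := by
        simp [htail, ENNReal.ofReal_mul]
    _ ≤ _ := ENNReal.ofReal_le_ofReal (mul_gammaTwoTail_log_add_log_log_add_le hM₁ ht)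

end
end

section
/- Let a > 0, b ∈ ℝ and let K ≥ 1 be an integer, and set f_0(x) = a x + b on [0,1]. Then inf over piecewise constant functions f with K pieces of ∫_0^1 |f_0(x) − f(x)| dx is at least a/(4K); explicitly, for every partition 0 = t_0 ≤ t_1 ≤ ⋯ ≤ t_K = 1 and all reals c_1, …, c_K, ∑_{k=1}^{K} ∫_{t_{k−1}}^{t_k} |a x + b − c_k| dx ≥ a/(4K). -/
open MeasureTheory intervalIntegral

lemma pc_key (a b c s u : ℝ) (ha : 0 ≤ a) (hsu : s ≤ u) :
    a * (u - s) ^ 2 / 4 ≤ ∫ x in s..u, |a * x + b - c| := by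
  set m := (s + u) / 2 with hm
  have hsm : s ≤ m := by rw [hm]; linarith
  have hmu : m ≤ u := by rw [hm]; linarith
  have hi : ∀ p q : ℝ, IntervalIntegrable (fun x => |a * x + b - c|) volume p q :=
    fun p q => (Continuous.intervalIntegrable (by continuity) p q)
  have hil : ∀ p q : ℝ, IntervalIntegrable (fun x => a * x + b - c) volume p q :=
    fun p q => (Continuous.intervalIntegrable (by continuity) p q)
  have hsplit : (∫ x in s..u, |a * x + b - c|) =
      (∫ x in s..m, |a * x + b - c|) + ∫ x in m..u, |a * x + b - c| :=
    (integral_add_adjacent_intervals (hi s m) (hi m u)).symm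
  have e : ∀ p q : ℝ, (∫ x in p..q, (a * x + b - c)) =
      a * (q ^ 2 - p ^ 2) / 2 + (b - c) * (q - p) := by
    intro p q
    have : (∫ x in p..q, (a * x + b - c)) =
        (∫ x in p..q, a * x) + ∫ x in p..q, (b - c) := by
      rw [← intervalIntegral.integral_add
        ((Continuous.intervalIntegrable (by continuity) p q)) intervalIntegrable_const]
      congr 1; funext x; ring
    rw [this, intervalIntegral.integral_const_mul, integral_id, intervalIntegral.integral_const, smul_eq_mul]
    ring
  have h1 : (∫ x in s..m, -(a * x + b - c)) ≤ ∫ x in s..m, |a * x + b - c| := by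
    apply intervalIntegral.integral_mono_on hsm ((hil s m).neg) (hi s m)
    intro x _; exact neg_le_abs _
  have h2 : (∫ x in m..u, (a * x + b - c)) ≤ ∫ x in m..u, |a * x + b - c| := by
    apply intervalIntegral.integral_mono_on hmu (hil m u) (hi m u)
    intro x _; exact le_abs_self _
  rw [intervalIntegral.integral_neg, e s m] at h1
  rw [e m u] at h2
  rw [hm] at h1 h2
  nlinarith [hsplit, h1, h2]

/-- Approximation of the linear function `x ↦ a x + b` (with `a > 0`) by piecewise constant
functions with `K` pieces: for every partition `0 = t_0 ≤ t_1 ≤ ⋯ ≤ t_K = 1` and all levels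
`c_1, …, c_K`, the `L¹([0,1])` distance is at least `a / (4 K)`. -/
theorem pc_approx_linear_lower_bound (a b : ℝ) (ha : 0 < a) (K : ℕ) (hK : 1 ≤ K)
    (t : ℕ → ℝ) (c : ℕ → ℝ) (ht0 : t 0 = 0) (htK : t K = 1)
    (hmono : ∀ k < K, t k ≤ t (k + 1)) :
    a / (4 * K) ≤ ∑ k ∈ Finset.range K, ∫ x in (t k)..(t (k + 1)), |a * x + b - c (k + 1)| := by
  have hsum1 : ∑ k ∈ Finset.range K, (t (k + 1) - t k) = 1 := by
    rw [Finset.sum_range_sub, ht0, htK]; ring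
  have hstep : ∑ k ∈ Finset.range K, a * (t (k + 1) - t k) ^ 2 / 4 ≤
      ∑ k ∈ Finset.range K, ∫ x in (t k)..(t (k + 1)), |a * x + b - c (k + 1)| := by
    apply Finset.sum_le_sum
    intro k hk
    exact pc_key a b (c (k + 1)) (t k) (t (k + 1)) ha.le (hmono k (Finset.mem_range.mp hk))
  refine le_trans ?_ hstep
  have hcs : (∑ k ∈ Finset.range K, (t (k + 1) - t k)) ^ 2 ≤
      (K : ℝ) * ∑ k ∈ Finset.range K, (t (k + 1) - t k) ^ 2 := by
    have := sq_sum_le_card_mul_sum_sq (s := Finset.range K)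
      (f := fun k => t (k + 1) - t k)
    simpa using this
  rw [hsum1] at hcs
  have hKpos : (0 : ℝ) < K := by exact_mod_cast hK
  have h2 : (1 : ℝ) / K ≤ ∑ k ∈ Finset.range K, (t (k + 1) - t k) ^ 2 := by
    rw [div_le_iff₀ hKpos]
    nlinarith [hcs]
  have : ∑ k ∈ Finset.range K, a * (t (k + 1) - t k) ^ 2 / 4 =
      a / 4 * ∑ k ∈ Finset.range K, (t (k + 1) - t k) ^ 2 := by
    rw [Finset.mul_sum]; apply Finset.sum_congr rfl; intro k _; ring
  rw [this]
  calc a / (4 * K) = a / 4 * (1 / K) := by field_simp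
    _ ≤ a / 4 * ∑ k ∈ Finset.range K, (t (k + 1) - t k) ^ 2 :=
      mul_le_mul_of_nonneg_left h2 (by linarith)
end

section
/- For every a ≥ 0, all b, c ∈ ℝ and all reals r < s, the inequality ∫_r^s |a x + b − c| dx ≥ a (s − r)² / 4 holds. -/
/-! Split `[r, s]` at its midpoint `m`: `|f|` dominates `-f` on `[r, m]` and `f` on `[m, s]`,
and for the affine `f x = a x + (b - c)` the difference of the two half-integrals is exactly
`a (s - r)² / 4`. -/

open MeasureTheory intervalIntegral

theorem integral_mul_add_const (a d r s : ℝ) :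
    ∫ x in r..s, (a * x + d) = a * (s ^ 2 - r ^ 2) / 2 + d * (s - r) := by
  rw [integral_add ((continuous_const_mul a).intervalIntegrable r s) intervalIntegrable_const,
    intervalIntegral.integral_const_mul, integral_id, intervalIntegral.integral_const, smul_eq_mul]
  ring

theorem integral_sub_integral_le_integral_abs {f : ℝ → ℝ} {r m s : ℝ} (hrm : r ≤ m)
    (hms : m ≤ s) (hf : IntervalIntegrable f volume r s) :
    (∫ x in m..s, f x) - ∫ x in r..m, f x ≤ ∫ x in r..s, |f x| := by
  have hm : m ∈ Set.uIcc r s := Set.mem_uIcc_of_le hrm hms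
  rw [← integral_add_adjacent_intervals
    (hf.abs.mono_set (Set.uIcc_subset_uIcc Set.left_mem_uIcc hm))
    (hf.abs.mono_set (Set.uIcc_subset_uIcc hm Set.right_mem_uIcc))]
  linarith [abs_integral_le_integral_abs (f := f) (μ := volume) hrm,
    abs_integral_le_integral_abs (f := f) (μ := volume) hms,
    neg_abs_le (∫ x in r..m, f x), le_abs_self (∫ x in m..s, f x)]

theorem integral_abs_linear_lower_bound_general (a b c r s : ℝ) (hrs : r < s) :
    a * (s - r) ^ 2 / 4 ≤ ∫ x in r..s, |a * x + b - c| := by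
  have halves : (∫ x in (r + s) / 2..s, (a * x + (b - c)))
      - ∫ x in r..(r + s) / 2, (a * x + (b - c)) = a * (s - r) ^ 2 / 4 := by
    simp only [integral_mul_add_const]; ring
  simp_rw [add_sub_assoc]
  rw [← halves]
  exact integral_sub_integral_le_integral_abs (by linarith) (by linarith)
    ((by fun_prop : Continuous fun x => a * x + (b - c)).intervalIntegrable _ _)

/-- For every `a ≥ 0`, all `b, c` and all reals `r < s`,
`∫_r^s |a x + b - c| dx ≥ a (s - r)² / 4`. -/
theorem integral_abs_linear_lower_bound (a b c r s : ℝ) (ha : 0 ≤ a) (hrs : r < s) :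
    a * (s - r) ^ 2 / 4 ≤ ∫ x in r..s, |a * x + b - c| :=
  integral_abs_linear_lower_bound_general a b c r s hrs
end

section
/- Let N be a Poisson(λ) random variable with λ > 0. For every real K ≥ 1 and every real M ≥ max(2λe, 1), P(N ≥ M K) ≤ K^{−M K}. -/
/-!
Chernoff's bound: `P(N ≥ x) ≤ exp(-s x) E[e^{sN}] = exp(-s x + λ(e^s - 1))` for every `s ≥ 0`.
Taking `e^s = 2eK` and using `2λeK ≤ x = MK`, the exponent is at most
`-x (1 + log 2K) + x = -x log 2K ≤ -x log K`.
-/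

open MeasureTheory ProbabilityTheory Real
open scoped NNReal Nat

namespace ProbabilityTheory

lemma hasSum_poissonMeasure_mul_exp_mul (r : ℝ≥0) (t : ℝ) :
    HasSum (fun n : ℕ ↦ exp (-r) * r ^ n / n ! * exp (t * n)) (exp (r * (exp t - 1))) := by
  have h := (NormedSpace.expSeries_div_hasSum_exp ((r : ℝ) * exp t)).mul_left (exp (-r))
  rw [← exp_eq_exp_ℝ, ← exp_add] at h
  have hterm : (fun n : ℕ ↦ exp (-r) * r ^ n / n ! * exp (t * n)) =
      fun n ↦ exp (-r) * ((r * exp t) ^ n / n !) := by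
    ext n
    rw [mul_pow, ← exp_nat_mul, mul_comm (n : ℝ) t]
    ring
  rwa [hterm, show (r : ℝ) * (exp t - 1) = -r + r * exp t by ring]

lemma integrable_exp_mul_poissonMeasure (r : ℝ≥0) (t : ℝ) :
    Integrable (fun n : ℕ ↦ exp (t * n)) (poissonMeasure r) := by
  rw [integrable_poissonMeasure_iff]
  simpa only [norm_eq_abs, abs_exp] using (hasSum_poissonMeasure_mul_exp_mul r t).summable

lemma mgf_poissonMeasure (r : ℝ≥0) (t : ℝ) :
    mgf (fun n : ℕ ↦ (n : ℝ)) (poissonMeasure r) t = exp (r * (exp t - 1)) := by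
  rw [mgf, integral_poissonMeasure]
  simpa only [smul_eq_mul] using (hasSum_poissonMeasure_mul_exp_mul r t).tsum_eq

lemma poissonMeasure_ge_le_exp (r : ℝ≥0) {s : ℝ} (hs : 0 ≤ s) (x : ℝ) :
    poissonMeasure r {n | x ≤ n} ≤ ENNReal.ofReal (exp (-s * x + r * (exp s - 1))) := by
  rw [← ofReal_measureReal, exp_add, ← mgf_poissonMeasure r s]
  exact ENNReal.ofReal_le_ofReal
    (measure_ge_le_exp_mul_mgf x hs (integrable_exp_mul_poissonMeasure r s))

lemma poissonMeasure_ge_le_rpow_neg (r : ℝ≥0) {K x : ℝ} (hK : 1 ≤ K)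
    (hx : 2 * r * exp 1 * K ≤ x) :
    poissonMeasure r {n | x ≤ n} ≤ ENNReal.ofReal (K ^ (-x)) := by
  have hK0 : 0 < K := by linarith
  have hlog2 : 0 ≤ log 2 := log_nonneg one_le_two
  have hlogK : 0 ≤ log K := log_nonneg hK
  have hlog2K : log (2 * K) = log 2 + log K := log_mul two_ne_zero hK0.ne'
  have hx0 : 0 ≤ x := le_trans (by positivity) hx
  refine (poissonMeasure_ge_le_exp r (s := 1 + log (2 * K)) (by linarith) x).trans
    (ENNReal.ofReal_le_ofReal ?_)
  rw [rpow_def_of_pos hK0, exp_le_exp, exp_add, exp_log (by positivity), hlog2K]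
  nlinarith [mul_nonneg hlog2 hx0, r.coe_nonneg]

end ProbabilityTheory

theorem poisson_tail_bound_general {Ω : Type*} [MeasurableSpace Ω] (P : Measure Ω)
    (lam : NNReal) (N : Ω → ℕ)
    (hmeas : Measurable N) (hpois : Measure.map N P = poissonMeasure lam)
    (K M : ℝ) (hK : 1 ≤ K) (hM : max (2 * lam * Real.exp 1) 1 ≤ M) :
    P {ω | M * K ≤ (N ω : ℝ)} ≤ ENNReal.ofReal (K ^ (-(M * K))) := by
  have hx : 2 * lam * exp 1 * K ≤ M * K :=
    mul_le_mul_of_nonneg_right (le_of_max_le_left hM) (by linarith)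
  change P (N ⁻¹' {n : ℕ | M * K ≤ n}) ≤ _
  rw [← Measure.map_apply hmeas .of_discrete, hpois]
  exact poissonMeasure_ge_le_rpow_neg lam hK hx

/-- If `N ~ Poisson(λ)` with `λ > 0`, then for every real `K ≥ 1` and every real
`M ≥ max(2λe, 1)`, `P(N ≥ M K) ≤ K^{-M K}`. -/
theorem poisson_tail_bound {Ω : Type*} [MeasurableSpace Ω] (P : Measure Ω)
    [IsProbabilityMeasure P] (lam : NNReal) (hlam : 0 < lam) (N : Ω → ℕ)
    (hmeas : Measurable N) (hpois : Measure.map N P = poissonMeasure lam)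
    (K M : ℝ) (hK : 1 ≤ K) (hM : max (2 * lam * Real.exp 1) 1 ≤ M) :
    P {ω | M * K ≤ (N ω : ℝ)} ≤ ENNReal.ofReal (K ^ (-(M * K))) :=
  poisson_tail_bound_general P lam N hmeas hpois K M hK hM
end

section
/- Let N be a Poisson(λ) random variable with λ > 0 and let (Δ_i)_{i≥0} be i.i.d. real random variables independent of N satisfying P(|Δ_i| ≥ s) ≤ L^{−1} e^{−L s^γ} for all s ≥ 0, where L, γ > 0. Then for every real K > 1, every real M ≥ max(2λe, 1) and t := ((M K + 1) L^{−1} log K)^{1/γ}, one has P( {N ≥ M K} ∪ { max_{0 ≤ i ≤ N} |Δ_i| ≥ t } ) ≤ (1 + M/L) K^{−M K}. -/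
/-!
Split the event at `N ≥ M K`. A Poisson tail satisfies `P(N ≥ k) ≤ λ^k / k! ≤ (e λ / k)^k`, which
is at most `K^{-MK}` once `k ≥ M K ≥ e λ K`. Since `N` is independent of the `Δ_i`, a union bound
over the random index set gives `P(max_{i ≤ N} |Δ_i| ≥ t) ≤ E[N + 1] · L⁻¹ K^{-(MK+1)}`, and
`E[N + 1] = λ + 1 ≤ M K` makes this at most `(M/L) K^{-MK}`. If instead `M K < λ + 1`, then
`λ < 1/4` and `M K < 5/4`, so the right-hand side is at least `1` (the tail bound at `s = 0`
forces `L ≤ 1`).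
-/

open MeasureTheory ProbabilityTheory
open scoped NNReal ENNReal Nat

namespace Real

lemma pow_div_factorial_le_exp_one_mul_div_pow {x : ℝ} (hx : 0 ≤ x) (n : ℕ) :
    x ^ n / n ! ≤ (exp 1 * x / n) ^ n := by
  rcases n.eq_zero_or_pos with rfl | hn
  · simp
  have hn' : (0 : ℝ) < n := by exact_mod_cast hn
  have hself : (n : ℝ) ^ n / n ! ≤ exp 1 ^ n := by
    simpa [← exp_nat_mul, mul_comm] using pow_div_factorial_le_exp (n : ℝ) hn'.le n
  calc x ^ n / n ! = (x / n) ^ n * ((n : ℝ) ^ n / n !) := by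
        rw [div_pow]; field_simp
    _ ≤ (x / n) ^ n * exp 1 ^ n := by gcongr
    _ = (exp 1 * x / n) ^ n := by ring

lemma exp_neg_mul_rpow_inv_rpow {L γ c K : ℝ} (hL : L ≠ 0) (hγ : γ ≠ 0) (hK : 0 < K)
    (h : 0 ≤ c * L⁻¹ * log K) : exp (-L * ((c * L⁻¹ * log K) ^ γ⁻¹) ^ γ) = K ^ (-c) := by
  rw [rpow_inv_rpow h hγ, rpow_def_of_pos hK]
  congr 1
  field_simp

end Real

namespace ProbabilityTheory

lemma tsum_poissonMeasure_singleton (r : ℝ≥0) : ∑' n, poissonMeasure r {n} = 1 := by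
  simpa using Measure.tsum_indicator_apply_singleton (poissonMeasure r) Set.univ .univ

lemma poissonMeasure_singleton_succ_mul (r : ℝ≥0) (n : ℕ) :
    poissonMeasure r {n + 1} * (n + 1) = r * poissonMeasure r {n} := by
  simp only [poissonMeasure_singleton]
  rw [← ENNReal.ofReal_coe_nnreal, ← ENNReal.ofReal_mul r.coe_nonneg,
    show ((n : ℝ≥0∞) + 1) = ENNReal.ofReal (n + 1) by norm_cast,
    ← ENNReal.ofReal_mul (by positivity)]
  congr 1
  rw [Nat.factorial_succ]
  push_cast
  field_simp
  ring

lemma lintegral_natCast_poissonMeasure (r : ℝ≥0) : ∫⁻ n, (n : ℝ≥0∞) ∂poissonMeasure r = r := by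
  rw [lintegral_countable', tsum_eq_zero_add' ENNReal.summable]
  simp only [Nat.cast_zero, zero_mul, zero_add, Nat.cast_succ, mul_comm (_ + 1 : ℝ≥0∞),
    poissonMeasure_singleton_succ_mul, ENNReal.tsum_mul_left, tsum_poissonMeasure_singleton, mul_one]

lemma poissonMeasure_singleton_add_le (r : ℝ≥0) (m k : ℕ) :
    poissonMeasure r {m + k} ≤ ENNReal.ofReal (r ^ k / k !) * poissonMeasure r {m} := by
  simp only [poissonMeasure_singleton]
  rw [← ENNReal.ofReal_mul (by positivity)]
  gcongr
  have hfac : ((k ! * m ! : ℕ) : ℝ) ≤ (m + k)! := by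
    exact_mod_cast Nat.le_of_dvd (Nat.factorial_pos _)
      (mul_comm m ! k ! ▸ Nat.factorial_mul_factorial_dvd_factorial_add m k)
  push_cast at hfac
  calc Real.exp (-r) * r ^ (m + k) / (m + k)! = Real.exp (-r) * r ^ m * r ^ k / (m + k)! := by
        ring
    _ ≤ Real.exp (-r) * r ^ m * r ^ k / (k ! * m !) := by gcongr
    _ = r ^ k / k ! * (Real.exp (-r) * r ^ m / m !) := by ring

lemma poissonMeasure_Ici_le (r : ℝ≥0) (k : ℕ) :
    poissonMeasure r (Set.Ici k) ≤ ENNReal.ofReal (r ^ k / k !) := by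
  rw [← Measure.tsum_indicator_apply_singleton _ _ measurableSet_Ici,
    ← (ENNReal.summable).sum_add_tsum_nat_add' (k := k),
    Finset.sum_eq_zero fun i hi => Set.indicator_of_notMem (by simpa using hi) _, zero_add]
  calc ∑' m, (Set.Ici k).indicator (fun n => poissonMeasure r {n}) (m + k)
      = ∑' m, poissonMeasure r {m + k} :=
        tsum_congr fun m => Set.indicator_of_mem (by simp) _
    _ ≤ ∑' m, ENNReal.ofReal (r ^ k / k !) * poissonMeasure r {m} :=
        ENNReal.tsum_le_tsum fun m => poissonMeasure_singleton_add_le r m k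
    _ = ENNReal.ofReal (r ^ k / k !) := by
        rw [ENNReal.tsum_mul_left, tsum_poissonMeasure_singleton, mul_one]

lemma poissonMeasure_le_rpow_neg (r : ℝ≥0) {K a : ℝ} (hK : 1 ≤ K) (ha : Real.exp 1 * r * K ≤ a) :
    poissonMeasure r {n | a ≤ n} ≤ ENNReal.ofReal (K ^ (-a)) := by
  set k := ⌈a⌉₊
  have hset : {n : ℕ | a ≤ n} = Set.Ici k := by ext n; simp [k, Nat.ceil_le]
  have hratio : Real.exp 1 * r / k ≤ K⁻¹ :=
    div_le_of_le_mul₀ k.cast_nonneg (by positivity) <| by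
      rw [← div_eq_inv_mul, le_div_iff₀ (by linarith)]
      exact ha.trans (Nat.le_ceil a)
  rw [hset]
  refine (poissonMeasure_Ici_le r k).trans (ENNReal.ofReal_le_ofReal ?_)
  calc (r : ℝ) ^ k / k ! ≤ (Real.exp 1 * r / k) ^ k :=
        Real.pow_div_factorial_le_exp_one_mul_div_pow r.2 k
    _ ≤ K⁻¹ ^ k := by gcongr
    _ = K ^ (-(k : ℝ)) := by rw [Real.rpow_neg (by linarith), Real.rpow_natCast, inv_pow]
    _ ≤ K ^ (-a) := Real.rpow_le_rpow_of_exponent_le hK (neg_le_neg (Nat.le_ceil a))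

lemma lintegral_add_one_of_map_eq_poissonMeasure {Ω : Type*} [MeasurableSpace Ω] {P : Measure Ω}
    {N : Ω → ℕ} {r : ℝ≥0} (hN : Measurable N) (hlaw : P.map N = poissonMeasure r) :
    ∫⁻ ω, (N ω + 1 : ℝ≥0∞) ∂P = ENNReal.ofReal (r + 1) := by
  rw [← lintegral_map (f := fun n : ℕ => (n + 1 : ℝ≥0∞)) .of_discrete hN, hlaw,
    lintegral_add_right _ measurable_const, lintegral_natCast_poissonMeasure]
  simp [ENNReal.ofReal_add]

lemma measure_exists_le_mem_le {Ω β : Type*} [MeasurableSpace Ω] [MeasurableSpace β]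
    {P : Measure Ω} {N : Ω → ℕ} {X : Ω → β} (hN : Measurable N) (hNX : IndepFun N X P)
    {S : ℕ → Set β} (hS : ∀ i, MeasurableSet (S i)) {q : ℝ≥0∞} (hq : ∀ i, P (X ⁻¹' S i) ≤ q) :
    P {ω | ∃ i ≤ N ω, X ω ∈ S i} ≤ (∫⁻ ω, (N ω + 1 : ℝ≥0∞) ∂P) * q := by
  set T : ℕ → Set β := fun n => ⋃ i ∈ Finset.Iic n, S i
  have hcover : {ω | ∃ i ≤ N ω, X ω ∈ S i} ⊆ ⋃ n, N ⁻¹' {n} ∩ X ⁻¹' T n := by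
    rintro ω ⟨i, hi, hX⟩
    exact Set.mem_iUnion.2 ⟨N ω, rfl, Set.mem_biUnion (Finset.mem_Iic.2 hi) hX⟩
  have hT : ∀ n, P (X ⁻¹' T n) ≤ (n + 1) * q := fun n => by
    rw [Set.preimage_iUnion₂]
    refine (measure_biUnion_finset_le _ _).trans ?_
    simpa using Finset.sum_le_sum fun i (_ : i ∈ Finset.Iic n) => hq i
  calc P {ω | ∃ i ≤ N ω, X ω ∈ S i} ≤ ∑' n, P (N ⁻¹' {n} ∩ X ⁻¹' T n) :=
        (measure_mono hcover).trans (measure_iUnion_le _)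
    _ = ∑' n, P (N ⁻¹' {n}) * P (X ⁻¹' T n) := by
        congr with n
        exact hNX.measure_inter_preimage_eq_mul _ _ (measurableSet_singleton n)
          (Finset.measurableSet_biUnion _ fun i _ => hS i)
    _ ≤ ∑' n, P (N ⁻¹' {n}) * ((n + 1) * q) := by gcongr with n; exact hT n
    _ = (∫⁻ ω, (N ω + 1 : ℝ≥0∞) ∂P) * q := by
        rw [← lintegral_map (f := fun n : ℕ => (n + 1 : ℝ≥0∞)) .of_discrete hN,
          lintegral_countable', ← ENNReal.tsum_mul_right]
        congr with n
        rw [Measure.map_apply hN (measurableSet_singleton n)]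
        ring

lemma measure_le_sup'_range_le {Ω : Type*} [MeasurableSpace Ω] {P : Measure Ω} {N : Ω → ℕ}
    {Δ : ℕ → Ω → ℝ} (hN : Measurable N) (hNΔ : IndepFun N (fun ω i => Δ i ω) P) {t : ℝ}
    {q : ℝ≥0∞} (hq : ∀ i, P {ω | t ≤ |Δ i ω|} ≤ q) :
    P {ω | t ≤ (Finset.range (N ω + 1)).sup'
        (Finset.nonempty_range_iff.mpr (Nat.succ_ne_zero _)) (fun i => |Δ i ω|)} ≤
      (∫⁻ ω, (N ω + 1 : ℝ≥0∞) ∂P) * q := by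
  have hevent : {ω | t ≤ (Finset.range (N ω + 1)).sup'
      (Finset.nonempty_range_iff.mpr (Nat.succ_ne_zero _)) (fun i => |Δ i ω|)} =
      {ω | ∃ i ≤ N ω, (fun j => Δ j ω) ∈ {f : ℕ → ℝ | t ≤ |f i|}} := by
    ext ω
    simp [Finset.le_sup'_iff]
  rw [hevent]
  exact measure_exists_le_mem_le hN hNΔ
    (fun i => measurableSet_le measurable_const (measurable_pi_apply i).abs) hq

end ProbabilityTheory

lemma one_le_mul_rpow_neg_of_lt_add_one {r K M c : ℝ} (hK : 1 < K) (hM : 1 ≤ M) (hc : 2 ≤ c)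
    (hMr : 2 * r * Real.exp 1 ≤ M) (hMK : M * K < r + 1) : 1 ≤ c * K ^ (-(M * K)) := by
  have he := Real.exp_one_gt_d9
  have hMMK : M ≤ M * K := le_mul_of_one_le_right (by linarith) hK.le
  have hKMK : K ≤ M * K := le_mul_of_one_le_left (by linarith) hM
  have hr : r < 1 / 4 := by nlinarith
  have hpow : K ^ (M * K) ≤ 2 :=
    calc K ^ (M * K) ≤ K ^ (2 : ℝ) := Real.rpow_le_rpow_of_exponent_le hK.le (by linarith)
      _ = K ^ 2 := Real.rpow_two K
      _ ≤ 2 := by nlinarith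
  rw [Real.rpow_neg (by linarith), ← div_eq_mul_inv, one_le_div (by positivity)]
  linarith

theorem poisson_jump_tail_bound_general {Ω : Type*} [MeasurableSpace Ω] (P : Measure Ω)
    [IsProbabilityMeasure P] (lam : NNReal) (N : Ω → ℕ)
    (hNmeas : Measurable N) (hpois : Measure.map N P = poissonMeasure lam)
    (Δ : ℕ → Ω → ℝ)
    (hindepN : IndepFun N (fun ω => fun i => Δ i ω) P)
    (L γ : ℝ) (hL : 0 < L) (hγ : 0 < γ)
    (htail : ∀ i, ∀ s : ℝ, 0 ≤ s →
      P {ω | s ≤ |Δ i ω|} ≤ ENNReal.ofReal (L⁻¹ * Real.exp (-L * s ^ γ)))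
    (K M : ℝ) (hK : 1 < K) (hM : max (2 * lam * Real.exp 1) 1 ≤ M) :
    P ({ω | M * K ≤ (N ω : ℝ)} ∪
        {ω | ((M * K + 1) * L⁻¹ * Real.log K) ^ γ⁻¹ ≤
          (Finset.range (N ω + 1)).sup'
            (Finset.nonempty_range_iff.mpr (Nat.succ_ne_zero _)) (fun i => |Δ i ω|)})
      ≤ ENNReal.ofReal ((1 + M / L) * K ^ (-(M * K))) := by
  obtain ⟨hMr, hM1⟩ := max_le_iff.1 hM
  have hK0 : 0 < K := by linarith
  have hL1 : L ≤ 1 := by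
    simpa [Real.zero_rpow hγ.ne', one_le_inv₀ hL] using htail 0 0 le_rfl
  by_cases hsmall : M * K < lam + 1
  · refine prob_le_one.trans (ENNReal.one_le_ofReal.2
      (one_le_mul_rpow_neg_of_lt_add_one hK hM1 ?_ hMr hsmall))
    linarith [(one_le_div hL).2 (hL1.trans hM1)]
  replace hsmall := not_lt.1 hsmall
  have hA : P {ω | M * K ≤ (N ω : ℝ)} ≤ ENNReal.ofReal (K ^ (-(M * K))) := by
    rw [show {ω | M * K ≤ (N ω : ℝ)} = N ⁻¹' {n | M * K ≤ n} from rfl,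
      ← Measure.map_apply hNmeas .of_discrete, hpois]
    exact poissonMeasure_le_rpow_neg lam hK.le (by nlinarith [Real.exp_pos 1, lam.2])
  have hbase : 0 ≤ (M * K + 1) * L⁻¹ * Real.log K :=
    mul_nonneg (mul_nonneg (by nlinarith) (inv_nonneg.2 hL.le)) (Real.log_nonneg hK.le)
  have hB := measure_le_sup'_range_le hNmeas hindepN fun i =>
    (htail i _ (Real.rpow_nonneg hbase _)).trans_eq <| by
      rw [Real.exp_neg_mul_rpow_inv_rpow hL.ne' hγ.ne' hK0 hbase]
  rw [lintegral_add_one_of_map_eq_poissonMeasure hNmeas hpois,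
    ← ENNReal.ofReal_mul (by positivity)] at hB
  have hBreal : (lam + 1) * (L⁻¹ * K ^ (-(M * K + 1))) ≤ M / L * K ^ (-(M * K)) := by
    rw [neg_add, Real.rpow_add hK0, Real.rpow_neg_one,
      show M / L * K ^ (-(M * K)) = M * K * (L⁻¹ * (K ^ (-(M * K)) * K⁻¹)) by field_simp]
    gcongr
  calc _ ≤ P {ω | M * K ≤ (N ω : ℝ)} + P _ := measure_union_le _ _
    _ ≤ ENNReal.ofReal (K ^ (-(M * K))) + ENNReal.ofReal (M / L * K ^ (-(M * K))) :=
        add_le_add hA (hB.trans (ENNReal.ofReal_le_ofReal hBreal))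
    _ = ENNReal.ofReal ((1 + M / L) * K ^ (-(M * K))) := by
        rw [← ENNReal.ofReal_add (by positivity) (by positivity)]
        ring_nf

/-- If `N ~ Poisson(λ)` with `λ > 0` and `(Δ_i)_{i ≥ 0}` are i.i.d. real random variables,
independent of `N`, with tails `P(|Δ_i| ≥ s) ≤ L⁻¹ e^{-L s^γ}` for all `s ≥ 0`, then for every
real `K > 1`, every real `M ≥ max(2λe, 1)` and `t := ((M K + 1) L⁻¹ log K)^{1/γ}`,
`P({N ≥ M K} ∪ {max_{0 ≤ i ≤ N} |Δ_i| ≥ t}) ≤ (1 + M/L) K^{-M K}`. -/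
theorem poisson_jump_tail_bound {Ω : Type*} [MeasurableSpace Ω] (P : Measure Ω)
    [IsProbabilityMeasure P] (lam : NNReal) (hlam : 0 < lam) (N : Ω → ℕ)
    (hNmeas : Measurable N) (hpois : Measure.map N P = poissonMeasure lam)
    (Δ : ℕ → Ω → ℝ) (hΔmeas : ∀ i, Measurable (Δ i))
    (hiid : iIndepFun Δ P)
    (hident : ∀ i, Measure.map (Δ i) P = Measure.map (Δ 0) P)
    (hindepN : IndepFun N (fun ω => fun i => Δ i ω) P)
    (L γ : ℝ) (hL : 0 < L) (hγ : 0 < γ)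
    (htail : ∀ i, ∀ s : ℝ, 0 ≤ s →
      P {ω | s ≤ |Δ i ω|} ≤ ENNReal.ofReal (L⁻¹ * Real.exp (-L * s ^ γ)))
    (K M : ℝ) (hK : 1 < K) (hM : max (2 * lam * Real.exp 1) 1 ≤ M) :
    P ({ω | M * K ≤ (N ω : ℝ)} ∪
        {ω | ((M * K + 1) * L⁻¹ * Real.log K) ^ γ⁻¹ ≤
          (Finset.range (N ω + 1)).sup'
            (Finset.nonempty_range_iff.mpr (Nat.succ_ne_zero _)) (fun i => |Δ i ω|)})
      ≤ ENNReal.ofReal ((1 + M / L) * K ^ (-(M * K))) :=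
  poisson_jump_tail_bound_general P lam N hNmeas hpois Δ hindepN L γ hL hγ htail K M hK hM
end

section
/- Let U, G, E be independent random variables with U uniformly distributed on [0,1], G distributed according to Gamma(2,1) and E distributed according to Exp(1). Then the product U·G has the Exp(1) distribution, and the sum U·G + E has the Gamma(2,1) distribution. -/
/-!
The law of `U * G` is the multiplicative convolution of the uniform law on `[0, 1]` with
`Γ(2, r)`. For `g > 0` the uniform mass of `{u | g u ≤ x}` is `min x g / g`, so the distribution
function at `x ≥ 0` is `∫₀^∞ r² e^{-rg} min x g dg = 1 - e^{-rx}`, that of `Exp(r)`.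
The law of `U * G + E` is then the additive convolution `Exp(r) ∗ Exp(r)`, whose density
`∫₀^z r e^{-rx} · r e^{-r(z-x)} dx = r² z e^{-rz}` is that of `Γ(2, r)`.
-/

open MeasureTheory ProbabilityTheory Real Set
open scoped ENNReal

namespace MeasureTheory.Measure

lemma mconv_apply {M : Type*} [Monoid M] [MeasurableSpace M] [MeasurableMul₂ M]
    (μ ν : Measure M) [SFinite ν] {s : Set M} (hs : MeasurableSet s) :
    (μ ∗ₘ ν) s = ∫⁻ x, ν ((x * ·) ⁻¹' s) ∂μ := by
  rw [mconv, map_apply measurable_mul hs, prod_apply (measurable_mul hs)]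
  rfl

lemma withDensity_conv_withDensity {G : Type*} [AddGroup G] [MeasurableSpace G]
    [MeasurableAdd₂ G] [MeasurableNeg G] (μ : Measure G) [SFinite μ] [μ.IsAddLeftInvariant]
    {f g : G → ℝ≥0∞} (hf : Measurable f) (hg : Measurable g) :
    μ.withDensity f ∗ μ.withDensity g = μ.withDensity (fun z ↦ ∫⁻ x, f x * g (-x + z) ∂μ) := by
  refine ext_of_lintegral _ fun φ hφ ↦ ?_
  have translate (x : G) : ∫⁻ y, g y * φ (x + y) ∂μ = ∫⁻ z, g (-x + z) * φ z ∂μ := by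
    rw [← lintegral_add_left_eq_self (fun z ↦ g (-x + z) * φ z) x]
    simp
  calc ∫⁻ z, φ z ∂(μ.withDensity f ∗ μ.withDensity g)
      = ∫⁻ x, f x * ∫⁻ z, g (-x + z) * φ z ∂μ ∂μ := by
        rw [lintegral_conv hφ, lintegral_withDensity_eq_lintegral_mul _ hf (by fun_prop)]
        refine lintegral_congr fun x ↦ ?_
        rw [Pi.mul_apply, lintegral_withDensity_eq_lintegral_mul _ hg (by fun_prop), ← translate]
        rfl
    _ = ∫⁻ x, ∫⁻ z, f x * (g (-x + z) * φ z) ∂μ ∂μ :=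
        lintegral_congr fun x ↦ (lintegral_const_mul _ (by fun_prop)).symm
    _ = ∫⁻ z, (∫⁻ x, f x * g (-x + z) ∂μ) * φ z ∂μ := by
        rw [lintegral_lintegral_swap (by fun_prop)]
        simp_rw [← mul_assoc]
        exact lintegral_congr fun z ↦
          lintegral_mul_const (f := fun x ↦ f x * g (-x + z)) _ (by fun_prop)
    _ = _ := by
        rw [lintegral_withDensity_eq_lintegral_mul _ (by fun_prop) hφ]
        rfl

end MeasureTheory.Measure

lemma ProbabilityTheory.HasLaw.of_map_eq {Ω 𝓧 : Type*} {mΩ : MeasurableSpace Ω}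
    {m𝓧 : MeasurableSpace 𝓧} {X : Ω → 𝓧} {μ : Measure 𝓧} [NeZero μ] {P : Measure Ω}
    (h : P.map X = μ) : HasLaw X μ P :=
  ⟨.of_map_ne_zero (h ▸ NeZero.ne μ), h⟩

instance : IsProbabilityMeasure (volume.restrict (Icc (0 : ℝ) 1)) := ⟨by simp⟩

namespace ProbabilityTheory

lemma gammaPDF_two_of_nonneg {r x : ℝ} (hx : 0 ≤ x) :
    gammaPDF 2 r x = ENNReal.ofReal (r ^ 2 * x * exp (-(r * x))) := by
  rw [gammaPDF_of_nonneg hx]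
  norm_num [Real.Gamma_two]

lemma expMeasure_Iic {r : ℝ} (hr : 0 < r) (x : ℝ) :
    expMeasure r (Iic x) = ENNReal.ofReal (1 - exp (-(r * x))) := by
  have := isProbabilityMeasure_expMeasure hr
  rw [← ofReal_cdf, cdf_expMeasure_eq hr]
  split_ifs with hx
  · rfl
  · rw [ENNReal.ofReal_zero, eq_comm, ENNReal.ofReal_eq_zero, sub_nonpos]
    exact one_le_exp (by nlinarith)

lemma integral_Ioc_sq_mul_mul_exp (r : ℝ) {x : ℝ} (hx : 0 ≤ x) :
    ∫ g in Ioc 0 x, r ^ 2 * g * exp (-(r * g)) = 1 - (1 + r * x) * exp (-(r * x)) := by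
  have antideriv (g : ℝ) : HasDerivAt (fun g ↦ -(1 + r * g) * exp (-(r * g)))
      (r ^ 2 * g * exp (-(r * g))) g :=
    ((((hasDerivAt_id' g).const_mul r).const_add 1).fun_neg.fun_mul
      ((hasDerivAt_id' g).const_mul r).fun_neg.exp).congr_deriv (by ring)
  rw [← intervalIntegral.integral_of_le hx,
    intervalIntegral.integral_eq_sub_of_hasDerivAt (fun g _ ↦ antideriv g)
      (by apply Continuous.intervalIntegrable; fun_prop)]
  simp only [mul_zero, add_zero, neg_zero, exp_zero, mul_one]
  ring

lemma integral_Ioi_mul_exp {r : ℝ} (hr : 0 < r) (x : ℝ) :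
    ∫ g in Ioi x, r * exp (-(r * g)) = exp (-(r * x)) := by
  simp_rw [integral_const_mul, ← neg_mul, integral_exp_mul_Ioi (neg_lt_zero.2 hr)]
  field_simp

lemma lintegral_Ioi_ofReal_sq_mul_exp_mul_min {r : ℝ} (hr : 0 < r) (x : ℝ) :
    ∫⁻ g in Ioi 0, ENNReal.ofReal (r ^ 2 * exp (-(r * g)) * min x g)
      = ENNReal.ofReal (1 - exp (-(r * x))) := by
  rcases lt_or_ge x 0 with hx | hx
  · rw [ENNReal.ofReal_eq_zero.2 (sub_nonpos.2 (one_le_exp (by nlinarith)))]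
    exact setLIntegral_eq_zero measurableSet_Ioi fun g _ ↦ ENNReal.ofReal_eq_zero.2
      (mul_nonpos_of_nonneg_of_nonpos (by positivity) ((min_le_left _ _).trans hx.le))
  set f := fun g ↦ r ^ 2 * exp (-(r * g)) * min x g
  have below : EqOn f (fun g ↦ r ^ 2 * g * exp (-(r * g))) (Ioc 0 x) := fun g hg ↦ by
    simp only [f, min_eq_right hg.2]
    ring
  have above : EqOn f (fun g ↦ r * x * (r * exp (-(r * g)))) (Ioi x) := fun g hg ↦ by
    simp only [f, min_eq_left (mem_Ioi.1 hg).le]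
    ring
  have int_below : IntegrableOn f (Ioc 0 x) :=
    (Continuous.integrableOn_Icc (by fun_prop)).mono_set Ioc_subset_Icc_self
  have int_above : IntegrableOn f (Ioi x) := by
    refine IntegrableOn.congr_fun ?_ above.symm measurableSet_Ioi
    simpa only [neg_mul, IntegrableOn] using
      ((exp_neg_integrableOn_Ioi x hr).const_mul r).const_mul (r * x)
  have int : IntegrableOn f (Ioi 0) := by
    rw [← Ioc_union_Ioi_eq_Ioi hx]
    exact int_below.union int_above
  rw [← ofReal_integral_eq_lintegral_ofReal int (ae_restrict_of_forall_mem measurableSet_Ioi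
    fun g hg ↦ mul_nonneg (by positivity) (le_min hx (mem_Ioi.1 hg).le))]
  rw [← Ioc_union_Ioi_eq_Ioi hx, setIntegral_union (Ioc_disjoint_Ioi le_rfl) measurableSet_Ioi
    int_below int_above, setIntegral_congr_fun measurableSet_Ioc below,
    setIntegral_congr_fun measurableSet_Ioi above, integral_Ioc_sq_mul_mul_exp r hx,
    integral_const_mul, integral_Ioi_mul_exp hr]
  congr 1
  ring

lemma restrict_Icc_preimage_mul_Iic {g : ℝ} (hg : 0 < g) (x : ℝ) :
    volume.restrict (Icc (0 : ℝ) 1) ((g * ·) ⁻¹' Iic x) = ENNReal.ofReal (min x g / g) := by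
  have slice : (g * ·) ⁻¹' Iic x ∩ Icc 0 1 = Icc 0 (min (x / g) 1) := by
    ext u
    simp only [mem_inter_iff, mem_preimage, mem_Iic, mem_Icc, le_min_iff, le_div_iff₀ hg,
      mul_comm u]
    tauto
  rw [Measure.restrict_apply (measurable_const_mul g measurableSet_Iic), slice, Real.volume_Icc,
    sub_zero, ← min_div_div_right hg.le, div_self hg.ne']

lemma volume_Icc_mconv_gammaMeasure_two {r : ℝ} (hr : 0 < r) :
    volume.restrict (Icc (0 : ℝ) 1) ∗ₘ gammaMeasure 2 r = expMeasure r := by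
  have := isProbabilityMeasure_gammaMeasure two_pos hr
  have := isProbabilityMeasure_expMeasure hr
  rw [Measure.mconv_comm]
  refine Measure.ext_of_Iic _ _ fun x ↦ ?_
  have slice_meas : Measurable fun g : ℝ ↦ volume.restrict (Icc (0 : ℝ) 1) ((g * ·) ⁻¹' Iic x) :=
    measurable_measure_prodMk_left (measurable_mul measurableSet_Iic)
  rw [Measure.mconv_apply _ _ measurableSet_Iic, expMeasure_Iic hr, gammaMeasure,
    lintegral_withDensity_eq_lintegral_mul _ (f := gammaPDF 2 r)
      (measurable_gammaPDFReal 2 r).ennreal_ofReal slice_meas,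
    ← lintegral_Ioi_ofReal_sq_mul_exp_mul_min hr x, ← lintegral_indicator measurableSet_Ioi]
  refine lintegral_congr fun g ↦ ?_
  rcases lt_trichotomy g 0 with hg | rfl | hg
  · simp [gammaPDF_of_neg hg, hg.not_gt]
  · simp [gammaPDF_two_of_nonneg le_rfl]
  · rw [indicator_of_mem (mem_Ioi.2 hg), Pi.mul_apply, gammaPDF_two_of_nonneg hg.le,
      restrict_Icc_preimage_mul_Iic hg, ← ENNReal.ofReal_mul (by positivity)]
    congr 1
    field_simp

lemma lintegral_exponentialPDF_mul_exponentialPDF_sub {r : ℝ} (hr : 0 ≤ r) (z : ℝ) :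
    ∫⁻ x, exponentialPDF r x * exponentialPDF r (z - x) = gammaPDF 2 r z := by
  rcases lt_or_ge z 0 with hz | hz
  · rw [gammaPDF_of_neg hz]
    convert lintegral_zero with x
    rcases lt_or_ge x 0 with hx | hx
    · simp [exponentialPDF_of_neg hx]
    · simp [exponentialPDF_of_neg (by linarith : z - x < 0)]
  have on_Icc : (fun x ↦ exponentialPDF r x * exponentialPDF r (z - x))
      = (Icc 0 z).indicator fun _ ↦ ENNReal.ofReal (r ^ 2 * exp (-(r * z))) := by
    funext x
    by_cases hx : x ∈ Icc 0 z
    · rw [indicator_of_mem hx, exponentialPDF_of_nonneg hx.1,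
        exponentialPDF_of_nonneg (sub_nonneg.2 hx.2), ← ENNReal.ofReal_mul (by positivity)]
      congr 1
      rw [show -(r * z) = -(r * x) + -(r * (z - x)) by ring, exp_add]
      ring
    · rw [indicator_of_notMem hx]
      rcases not_and_or.1 hx with hx | hx
      · simp [exponentialPDF_of_neg (not_le.1 hx)]
      · simp [exponentialPDF_of_neg (by linarith [not_le.1 hx] : z - x < 0)]
  rw [on_Icc, lintegral_indicator_const measurableSet_Icc, Real.volume_Icc, sub_zero,
    gammaPDF_two_of_nonneg hz, ← ENNReal.ofReal_mul (by positivity)]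
  congr 1
  ring

lemma expMeasure_conv_expMeasure {r : ℝ} (hr : 0 ≤ r) :
    expMeasure r ∗ expMeasure r = gammaMeasure 2 r := by
  rw [expMeasure, gammaMeasure, gammaMeasure, Measure.withDensity_conv_withDensity volume
    (f := gammaPDF 1 r) (g := gammaPDF 1 r) (measurable_gammaPDFReal 1 r).ennreal_ofReal
    (measurable_gammaPDFReal 1 r).ennreal_ofReal]
  simp_rw [neg_add_eq_sub]
  exact congrArg _ (funext (lintegral_exponentialPDF_mul_exponentialPDF_sub hr))

end ProbabilityTheory

theorem unif_mul_gamma_add_exp_general {Ω : Type*} [MeasurableSpace Ω] (P : Measure Ω)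
    (U G E : Ω → ℝ)
    (hindep : iIndepFun ![U, G, E] P)
    (hU : Measure.map U P = volume.restrict (Set.Icc (0 : ℝ) 1))
    (hG : Measure.map G P = gammaMeasure 2 1)
    (hE : Measure.map E P = expMeasure 1) :
    Measure.map (fun ω => U ω * G ω) P = expMeasure 1 ∧
    Measure.map (fun ω => U ω * G ω + E ω) P = gammaMeasure 2 1 := by
  have := isProbabilityMeasure_gammaMeasure two_pos one_pos
  have := isProbabilityMeasure_expMeasure one_pos
  have hU' := HasLaw.of_map_eq hU
  have hG' := HasLaw.of_map_eq hG
  have hE' := HasLaw.of_map_eq hE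
  have hUG : HasLaw (fun ω ↦ U ω * G ω) (expMeasure 1) P := by
    rw [← volume_Icc_mconv_gammaMeasure_two one_pos]
    exact (hindep.indepFun (i := 0) (j := 1) (by decide)).hasLaw_fun_mul hU' hG'
  have hUG_indep_E : IndepFun (fun ω ↦ U ω * G ω) E P :=
    hindep.indepFun_mul_left₀ (fun i ↦ by
      fin_cases i
      exacts [hU'.aemeasurable, hG'.aemeasurable, hE'.aemeasurable]) 0 1 2 (by decide) (by decide)
  have hUGE : HasLaw (fun ω ↦ U ω * G ω + E ω) (gammaMeasure 2 1) P := by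
    rw [← expMeasure_conv_expMeasure zero_le_one]
    exact hUG_indep_E.hasLaw_fun_add hUG hE'
  exact ⟨hUG.map_eq, hUGE.map_eq⟩

/-- If `U`, `G`, `E` are independent with `U ~ Unif[0,1]`, `G ~ Γ(2,1)` and `E ~ Exp(1)`,
then `U·G ~ Exp(1)` and `U·G + E ~ Γ(2,1)`. -/
theorem unif_mul_gamma_add_exp {Ω : Type*} [MeasurableSpace Ω] (P : Measure Ω)
    [IsProbabilityMeasure P] (U G E : Ω → ℝ)
    (hUmeas : Measurable U) (hGmeas : Measurable G) (hEmeas : Measurable E)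
    (hindep : iIndepFun ![U, G, E] P)
    (hU : Measure.map U P = volume.restrict (Set.Icc (0 : ℝ) 1))
    (hG : Measure.map G P = gammaMeasure 2 1)
    (hE : Measure.map E P = expMeasure 1) :
    Measure.map (fun ω => U ω * G ω) P = expMeasure 1 ∧
    Measure.map (fun ω => U ω * G ω + E ω) P = gammaMeasure 2 1 :=
  unif_mul_gamma_add_exp_general P U G E hindep hU hG hE
end

section
/- For all reals n > 0 and K > 0, define S(y) = exp( −(n/(2K²)) (min(y,1))² − (n/K²) max(y − 1, 0) ) for y ≥ 0. Then ∫_0^∞ S(y) dy = ∫_0^1 e^{−n y²/(2K²)} dy + (K²/n) e^{−n/(2K²)}, and this quantity is at most max(7/16, 1/2 − n/(2⁷ K²)) + K²/n. -/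
/-!
Write `c = n / (2K²)`. Splitting the integral at `y = 1`, the integrand is the Gaussian
`exp (-c y²)` on `(0, 1]` and the exponential tail `exp (-c - 2c (y - 1))` beyond, which
integrates to `exp (-c) / (2c)`. For the bound, when `c ≤ 2` the alternating Taylor bound
`exp (-x) ≤ 1 - x + x²/2 - x³/6 + x⁴/24`, applied to both terms, leaves a polynomial
inequality in `c`; when `c ≥ 2` the Gaussian term is at most the half-line integral
`√(π/c)/2` and `exp (-c) ≤ exp (-2) ≤ 1/5`.
-/

open MeasureTheory Set Real

theorem exp_neg_le_taylor_four {x : ℝ} (hx : 0 ≤ x) :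
    exp (-x) ≤ 1 - x + x ^ 2 / 2 - x ^ 3 / 6 + x ^ 4 / 24 := by
  have hP : 1 + x + x ^ 2 / 2 + x ^ 3 / 6 + x ^ 4 / 24 ≤ exp x := by
    simpa [Finset.sum_range_succ, Nat.factorial] using sum_le_exp_of_nonneg hx 5
  have hT : 0 ≤ 1 - x + x ^ 2 / 2 - x ^ 3 / 6 + x ^ 4 / 24 := by
    nlinarith [sq_nonneg (x ^ 2 - 2 * x), sq_nonneg (x - 3 / 2), sq_nonneg x]
  -- For the degree-4 Taylor polynomial `P` of `exp`, `P(-x) P(x) = 1 + x⁶/72 + x⁸/576`.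
  have hTP : 1 ≤ (1 - x + x ^ 2 / 2 - x ^ 3 / 6 + x ^ 4 / 24) *
      (1 + x + x ^ 2 / 2 + x ^ 3 / 6 + x ^ 4 / 24) := by
    nlinarith [pow_nonneg hx 6, pow_nonneg hx 8]
  rw [exp_neg, inv_le_iff_one_le_mul₀ (exp_pos x)]
  nlinarith [mul_le_mul_of_nonneg_left hP hT]

theorem integral_exp_neg_min_sq_sub_max (a : ℝ) {b : ℝ} (hb : 0 < b) :
    ∫ y in Ioi (0 : ℝ), exp (-a * min y 1 ^ 2 - b * max (y - 1) 0) =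
      (∫ y in (0 : ℝ)..1, exp (-a * y ^ 2)) + exp (-a) / b := by
  set f := fun y : ℝ => exp (-a * min y 1 ^ 2 - b * max (y - 1) 0)
  have head : EqOn f (fun y => exp (-a * y ^ 2)) (Ioc 0 1) := fun y hy => by
    simp [f, hy.2]
  have tail : EqOn f (fun y => exp (b - a) * exp (-b * y)) (Ioi 1) := fun y (hy : 1 < y) => by
    simp only [f, min_eq_right hy.le, max_eq_left (sub_nonneg.2 hy.le), ← exp_add]
    ring_nf
  have hb' : -b < 0 := neg_lt_zero.2 hb
  have htail : IntegrableOn f (Ioi 1) :=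
    (integrableOn_congr_fun tail measurableSet_Ioi).2
      ((integrableOn_exp_mul_Ioi hb' 1).const_mul _)
  rw [← Ioc_union_Ioi_eq_Ioi zero_le_one, setIntegral_union (Ioc_disjoint_Ioi le_rfl)
    measurableSet_Ioi ((by fun_prop : Continuous f).integrableOn_Ioc) htail,
    setIntegral_congr_fun measurableSet_Ioc head, setIntegral_congr_fun measurableSet_Ioi tail,
    integral_const_mul, integral_exp_mul_Ioi hb', intervalIntegral.integral_of_le zero_le_one,
    mul_div_assoc', mul_neg, ← exp_add, neg_div_neg_eq]
  ring_nf

theorem integral_exp_neg_mul_sq_le_taylor {c : ℝ} (hc : 0 ≤ c) :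
    ∫ y in (0 : ℝ)..1, exp (-c * y ^ 2) ≤
      1 - c / 3 + c ^ 2 / 10 - c ^ 3 / 42 + c ^ 4 / 216 := by
  have htaylor : ∀ y, exp (-c * y ^ 2) ≤
      1 - c * y ^ 2 + c ^ 2 * y ^ 4 / 2 - c ^ 3 * y ^ 6 / 6 + c ^ 4 * y ^ 8 / 24 := fun y => by
    rw [neg_mul]
    exact (exp_neg_le_taylor_four (mul_nonneg hc (sq_nonneg y))).trans_eq (by ring)
  have hint : ∀ f : ℝ → ℝ, Continuous f → IntervalIntegrable f volume 0 1 :=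
    fun f hf => hf.intervalIntegrable 0 1
  refine (intervalIntegral.integral_mono zero_le_one (hint _ (by fun_prop)) (hint _ (by fun_prop))
    htaylor).trans_eq ?_
  rw [intervalIntegral.integral_add, intervalIntegral.integral_sub, intervalIntegral.integral_add,
    intervalIntegral.integral_sub]
  all_goals first
    | exact hint _ (by fun_prop)
    | norm_num [integral_pow, mul_div_assoc]
  ring

theorem integral_exp_neg_mul_sq_le_gaussian {c : ℝ} (hc : 0 < c) :
    ∫ y in (0 : ℝ)..1, exp (-c * y ^ 2) ≤ √(π / c) / 2 := by
  rw [intervalIntegral.integral_of_le zero_le_one, ← integral_gaussian_Ioi c]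
  exact setIntegral_mono_set (integrable_exp_neg_mul_sq hc).integrableOn
    (.of_forall fun _ => (exp_pos _).le) Ioc_subset_Ioi_self.eventuallyLE

theorem integral_exp_neg_mul_sq_add_le_of_le_two {c : ℝ} (hc : 0 < c) (hc2 : c ≤ 2) :
    (∫ y in (0 : ℝ)..1, exp (-c * y ^ 2)) + exp (-c) / (2 * c) ≤
      1 / 2 - c / 64 + 1 / (2 * c) := by
  have htail : exp (-c) / (2 * c) ≤ 1 / (2 * c) - (1 / 2 - c / 4 + c ^ 2 / 12 - c ^ 3 / 48) := by
    calc exp (-c) / (2 * c) ≤ (1 - c + c ^ 2 / 2 - c ^ 3 / 6 + c ^ 4 / 24) / (2 * c) := by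
          gcongr; exact exp_neg_le_taylor_four hc.le
      _ = _ := by field_simp; ring
  nlinarith [integral_exp_neg_mul_sq_le_taylor hc.le, mul_nonneg (mul_nonneg (sub_nonneg.2 hc2)
    (sq_nonneg c)) hc.le, mul_nonneg (sub_nonneg.2 hc2) (sq_nonneg c),
    mul_nonneg (sub_nonneg.2 hc2) hc.le]

theorem integral_exp_neg_mul_sq_add_le_of_two_le {c : ℝ} (hc2 : 2 ≤ c) :
    (∫ y in (0 : ℝ)..1, exp (-c * y ^ 2)) + exp (-c) / (2 * c) ≤ 7 / 16 + 1 / (2 * c) := by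
  have hc : 0 < c := by linarith
  have hgauss : √(π / c) ≤ 7 / 8 + 4 / (5 * c) := by
    rw [sqrt_le_left (by positivity), div_le_iff₀ hc]
    field_simp
    nlinarith [pi_lt_d2, mul_self_nonneg (c - 2)]
  have hexp : exp (-c) ≤ 1 / 5 := by
    have h2 : 5 ≤ exp 2 := by
      have := sum_le_exp_of_nonneg zero_le_two 3
      norm_num [Finset.sum_range_succ] at this
      linarith
    calc exp (-c) ≤ exp (-2) := exp_le_exp.2 (by linarith)
      _ ≤ 1 / 5 := by rw [exp_neg, inv_eq_one_div]; gcongr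
  calc (∫ y in (0 : ℝ)..1, exp (-c * y ^ 2)) + exp (-c) / (2 * c)
      ≤ (7 / 8 + 4 / (5 * c)) / 2 + 1 / 5 / (2 * c) := by
        gcongr
        exact (integral_exp_neg_mul_sq_le_gaussian hc).trans (by gcongr)
    _ = 7 / 16 + 1 / (2 * c) := by field_simp; ring

theorem integral_exp_neg_mul_sq_add_le {c : ℝ} (hc : 0 < c) :
    (∫ y in (0 : ℝ)..1, exp (-c * y ^ 2)) + exp (-c) / (2 * c) ≤
      max (7 / 16) (1 / 2 - c / 64) + 1 / (2 * c) := by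
  rcases le_total c 2 with hc2 | hc2
  · exact (integral_exp_neg_mul_sq_add_le_of_le_two hc hc2).trans
      (by gcongr; exact le_max_right _ _)
  · exact (integral_exp_neg_mul_sq_add_le_of_two_le hc2).trans
      (by gcongr; exact le_max_left _ _)

/-- For `n, K > 0` and the survival function
`S(y) = exp(-(n/(2K²)) (min(y,1))² - (n/K²) (y-1)₊)`, the integral `∫_0^∞ S(y) dy` equals
`∫_0^1 e^{-n y²/(2K²)} dy + (K²/n) e^{-n/(2K²)}`, and is at most
`max(7/16, 1/2 - n/(2⁷K²)) + K²/n`. -/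
theorem survival_first_moment (n K : ℝ) (hn : 0 < n) (hK : 0 < K) :
    (∫ y in Set.Ioi (0 : ℝ),
        Real.exp (-(n / (2 * K ^ 2)) * (min y 1) ^ 2 - (n / K ^ 2) * max (y - 1) 0)) =
      (∫ y in (0 : ℝ)..1, Real.exp (-n * y ^ 2 / (2 * K ^ 2))) +
        (K ^ 2 / n) * Real.exp (-n / (2 * K ^ 2)) ∧
    (∫ y in Set.Ioi (0 : ℝ),
        Real.exp (-(n / (2 * K ^ 2)) * (min y 1) ^ 2 - (n / K ^ 2) * max (y - 1) 0)) ≤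
      max (7 / 16) (1 / 2 - n / (2 ^ 7 * K ^ 2)) + K ^ 2 / n := by
  set c := n / (2 * K ^ 2) with hc_def
  have hc : 0 < c := by positivity
  have hdecay : n / K ^ 2 = 2 * c := by rw [hc_def]; field_simp
  have hmoment : (∫ y in Ioi (0 : ℝ), exp (-c * min y 1 ^ 2 - n / K ^ 2 * max (y - 1) 0)) =
      (∫ y in (0 : ℝ)..1, exp (-c * y ^ 2)) + exp (-c) / (2 * c) := by
    rw [integral_exp_neg_min_sq_sub_max c (by positivity), hdecay]
  have hK2n : K ^ 2 / n = 1 / (2 * c) := by rw [hc_def]; field_simp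
  have hgauss : ∀ y : ℝ, -n * y ^ 2 / (2 * K ^ 2) = -c * y ^ 2 := fun y => by rw [hc_def]; ring
  have hslope : n / (2 ^ 7 * K ^ 2) = c / 64 := by rw [hc_def]; ring
  simp only [hgauss, hmoment, hK2n, hslope, neg_div, ← hc_def]
  exact ⟨by ring, integral_exp_neg_mul_sq_add_le hc⟩
end

section
/- Let m ≥ 1 be an integer, t > 0, and let Θ_{m,t} be the set of piecewise constant functions f: [0,1] → ℝ with at most m jumps, |f(0)| ≤ t, and every jump of absolute size at most t. Then for every 0 < ε ≤ 2mt there exist an integer N ≤ 2 (4mt/ε)^m (4(m+1)t/ε + 3)^{m+1} and integrable functions ℓ_1, …, ℓ_N on [0,1] such that for every f ∈ Θ_{m,t} there is some index j with ℓ_j(x) ≤ f(x) for all x ∈ [0,1) and ∫_0^1 (f(x) − ℓ_j(x)) dx ≤ ε. In particular the one-sided bracketing number of Θ_{m,t} at level ε is at most 2 (4mt/ε)^m (4(m+1)t/ε + 3)^{m+1}. -/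
/-!
Round the `m` knots of `f` down to the grid `ℤ / K` with `K = ⌈2mt/ε⌉` and its `m + 1` levels,
which lie in `[-(m+1)t, (m+1)t]`, down to the grid `(ε/2)ℤ`. The lower function is the minimum
over `i` of the function equal to the rounded `i`-th level on the rounded `i`-th piece stretched
by `1/K` to the right, and to `(m+1)t` elsewhere. The stretch makes every true piece lie inside
its window, so the minimum lies below `f`. Conversely, if `x` is in the `k`-th piece and also in
the window of some `i`, then `x` lies within `1/K` after every knot between `i` and `k`, so
`f x - ℓ x ≤ ε/2 + t · #{knots in (x - 1/K, x]}`, which integrates to at most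
`ε/2 + tm/K ≤ ε`. There are `K^m (⌊4(m+1)t/ε⌋ + 1)^(m+1)` choices of grid points.
-/

open MeasureTheory Set

lemma exists_mem_Ico_of_mem_Ico (s : ℕ → ℝ) {x : ℝ} :
    ∀ {n : ℕ}, x ∈ Ico (s 0) (s n) → ∃ k < n, x ∈ Ico (s k) (s (k + 1))
  | 0, hx => absurd hx.2 (not_lt.2 hx.1)
  | n + 1, hx => by
    by_cases hn : s n ≤ x
    · exact ⟨n, n.lt_succ_self, hn, hx.2⟩
    · obtain ⟨k, hk, hxk⟩ := exists_mem_Ico_of_mem_Ico s ⟨hx.1, not_le.1 hn⟩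
      exact ⟨k, hk.trans n.lt_succ_self, hxk⟩

noncomputable def stepFun (m : ℕ) (s a : ℕ → ℝ) (x : ℝ) : ℝ :=
  ∑ j ∈ Finset.range (m + 1), if s j ≤ x ∧ x < s (j + 1) then a j else 0

lemma stepFun_eq {m : ℕ} {s : ℕ → ℝ} (hs : MonotoneOn s (Iic (m + 1))) (a : ℕ → ℝ)
    {k : ℕ} (hk : k ≤ m) {x : ℝ} (hx : x ∈ Ico (s k) (s (k + 1))) : stepFun m s a x = a k := by
  refine (Finset.sum_eq_single_of_mem k (by simp; omega) fun j hj hjk => if_neg ?_).trans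
    (if_pos hx)
  rintro ⟨hjx, hxj⟩
  simp only [Finset.mem_range] at hj
  rcases lt_or_gt_of_ne hjk with hjk | hjk
  · exact (hxj.trans_le ((hs (by simp; omega) (by simp; omega) hjk).trans hx.1)).false
  · exact (hx.2.trans_le ((hs (by simp; omega) (by simp; omega) hjk).trans hjx)).false

lemma monotoneOn_Iic_of_le_succ {m : ℕ} {s : ℕ → ℝ} (hs : ∀ j ≤ m, s j ≤ s (j + 1)) :
    MonotoneOn s (Iic (m + 1)) :=
  monotoneOn_of_le_succ ordConnected_Iic fun j _ _ hj => hs j (by simp at hj; omega)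

noncomputable def lowerBracket (m : ℕ) (U : ℕ → ℝ) (A : Fin (m + 1) → ℝ) (h M : ℝ) : ℝ → ℝ :=
  Finset.univ.inf' Finset.univ_nonempty fun i : Fin (m + 1) =>
    (Ico (U i) (U (i + 1) + h)).piecewise (fun _ => A i) (fun _ => M)

noncomputable def knotCover (m : ℕ) (U : ℕ → ℝ) (h : ℝ) (x : ℝ) : ℝ :=
  ∑ l ∈ Finset.range m, (Ico (U (l + 1)) (U (l + 1) + h)).indicator 1 x

section LowerBracket

variable {m : ℕ} {U : ℕ → ℝ} {A : Fin (m + 1) → ℝ} {h M : ℝ}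

lemma integrable_lowerBracket {μ : Measure ℝ} [IsFiniteMeasure μ] :
    Integrable (lowerBracket m U A h M) μ :=
  Finset.inf'_induction _ _ (p := (Integrable · μ)) (fun _ hf _ hg => hf.inf hg) fun _ _ =>
    Integrable.piecewise measurableSet_Ico (integrable_const _).integrableOn
      (integrable_const _).integrableOn

lemma lowerBracket_le {x : ℝ} (k : Fin (m + 1)) (hx : x ∈ Ico (U k) (U (k + 1) + h)) :
    lowerBracket m U A h M x ≤ A k := by
  rw [lowerBracket, Finset.inf'_apply]
  exact (Finset.inf'_le _ (Finset.mem_univ k)).trans_eq (piecewise_eq_of_mem _ _ _ hx)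

lemma knotCover_nonneg (x : ℝ) : 0 ≤ knotCover m U h x :=
  Finset.sum_nonneg fun _ _ => indicator_nonneg (fun _ _ => zero_le_one) _

lemma integrable_indicator_Ico_one (u h : ℝ) : Integrable ((Ico u (u + h)).indicator (1 : ℝ → ℝ)) :=
  (integrable_indicator_iff measurableSet_Ico).2 (integrableOn_const (by simp))

lemma integrable_knotCover : Integrable (knotCover m U h) :=
  integrable_finsetSum _ fun _ _ => integrable_indicator_Ico_one _ _

lemma integral_knotCover (hh : 0 ≤ h) : ∫ x, knotCover m U h x = m * h := by
  simp only [knotCover]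
  rw [integral_finsetSum _ fun _ _ => integrable_indicator_Ico_one _ _]
  simp [integral_indicator_one measurableSet_Ico, hh]

lemma abs_sub_le_mul_knotCover {a : ℕ → ℝ} {t x : ℝ} (ht : 0 ≤ t)
    (ha : ∀ l < m, |a (l + 1) - a l| ≤ t) {i j : ℕ} (hij : i ≤ j) (hj : j ≤ m)
    (hx : ∀ l ∈ Finset.Ico i j, x ∈ Ico (U (l + 1)) (U (l + 1) + h)) :
    |a j - a i| ≤ t * knotCover m U h x := by
  calc |a j - a i| = dist (a i) (a j) := by rw [Real.dist_eq, abs_sub_comm]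
    _ ≤ ∑ l ∈ Finset.Ico i j, dist (a l) (a (l + 1)) := dist_le_Ico_sum_dist a hij
    _ ≤ ∑ l ∈ Finset.Ico i j, t * (Ico (U (l + 1)) (U (l + 1) + h)).indicator 1 x := by
      refine Finset.sum_le_sum fun l hl => ?_
      rw [indicator_of_mem (hx l hl), Pi.one_apply, mul_one, Real.dist_eq, abs_sub_comm]
      exact ha l ((Finset.mem_Ico.1 hl).2.trans_le hj)
    _ ≤ ∑ l ∈ Finset.range m, t * (Ico (U (l + 1)) (U (l + 1) + h)).indicator 1 x :=
      Finset.sum_le_sum_of_subset_of_nonneg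
        (fun l hl => Finset.mem_range.2 ((Finset.mem_Ico.1 hl).2.trans_le hj))
        fun _ _ _ => mul_nonneg ht (indicator_nonneg (fun _ _ => zero_le_one) _)
    _ = t * knotCover m U h x := (Finset.mul_sum _ _ _).symm

lemma sub_lowerBracket_le {a : ℕ → ℝ} {t δ x : ℝ} (ht : 0 ≤ t) (hδ : 0 ≤ δ)
    (hU : MonotoneOn U (Iic m)) (ha : ∀ l < m, |a (l + 1) - a l| ≤ t)
    (hA : ∀ i : Fin (m + 1), a i ≤ A i + δ) (k : Fin (m + 1)) (haM : a k ≤ M)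
    (hx : x ∈ Ico (U k) (U (k + 1) + h)) :
    a k - lowerBracket m U A h M x ≤ δ + t * knotCover m U h x := by
  rw [sub_le_comm, lowerBracket, Finset.inf'_apply]
  refine Finset.le_inf' _ _ fun i _ => ?_
  have hk := Nat.lt_succ_iff.1 k.2
  have hi := Nat.lt_succ_iff.1 i.2
  by_cases hxi : x ∈ Ico (U i) (U (i + 1) + h)
  · rw [piecewise_eq_of_mem _ _ _ hxi]
    have hki : a k - a i ≤ t * knotCover m U h x := by
      rcases le_total (i : ℕ) k with hik | hki
      · refine (le_abs_self _).trans (abs_sub_le_mul_knotCover ht ha hik hk fun l hl => ?_)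
        obtain ⟨hil, hlk⟩ := Finset.mem_Ico.1 hl
        exact ⟨(hU (by simp; omega) (by simp; omega) hlk).trans hx.1,
          hxi.2.trans_le (by gcongr; exact hU (by simp; omega) (by simp; omega) (by omega))⟩
      · refine (le_abs_self _).trans ((abs_sub_comm _ _).trans_le
          (abs_sub_le_mul_knotCover ht ha hki hi fun l hl => ?_))
        obtain ⟨hkl, hli⟩ := Finset.mem_Ico.1 hl
        exact ⟨(hU (by simp; omega) (by simp; omega) hli).trans hxi.1,
          hx.2.trans_le (by gcongr; exact hU (by simp; omega) (by simp; omega) (by omega))⟩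
    linarith [hA i]
  · rw [piecewise_eq_of_notMem _ _ _ hxi]
    linarith [mul_nonneg ht (knotCover_nonneg x : 0 ≤ knotCover m U h x)]

lemma intervalIntegral_le_of_le_knotCover {g : ℝ → ℝ} {t δ : ℝ} (ht : 0 ≤ t) (hh : 0 ≤ h)
    (hg : ∀ x ∈ Ico (0 : ℝ) 1, 0 ≤ g x ∧ g x ≤ δ + t * knotCover m U h x) :
    ∫ x in (0 : ℝ)..1, g x ≤ δ + t * (m * h) := by
  have hB : Integrable (fun x => δ + t * knotCover m U h x) (volume.restrict (Ioo 0 1)) :=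
    (integrable_const δ).add (integrable_knotCover.integrableOn.const_mul t)
  calc ∫ x in (0 : ℝ)..1, g x = ∫ x in Ioo 0 1, g x := by
        rw [intervalIntegral.integral_of_le zero_le_one, integral_Ioc_eq_integral_Ioo]
    _ ≤ ∫ x in Ioo 0 1, (δ + t * knotCover m U h x) := by
        have hg' := ae_restrict_of_forall_mem (μ := volume) measurableSet_Ioo
          fun x (hx : x ∈ Ioo (0 : ℝ) 1) => hg x (Ioo_subset_Ico_self hx)
        exact integral_mono_of_nonneg (hg'.mono fun _ => And.left) hB (hg'.mono fun _ => And.right)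
    _ = δ + t * ∫ x in Ioo 0 1, knotCover m U h x := by
        rw [integral_add (integrable_const δ) (integrable_knotCover.integrableOn.const_mul t),
          integral_const_mul]
        simp
    _ ≤ δ + t * (m * h) := by
        gcongr
        exact (setIntegral_le_integral integrable_knotCover (ae_of_all _ knotCover_nonneg)).trans_eq
          (integral_knotCover hh)

lemma lowerBracket_le_stepFun_and_sub_le {s a : ℕ → ℝ} {t δ x : ℝ} (ht : 0 ≤ t) (hδ : 0 ≤ δ)
    (hs : MonotoneOn s (Iic (m + 1))) (hU : ∀ l ≤ m + 1, U l ≤ s l ∧ s l ≤ U l + h)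
    (hUmono : MonotoneOn U (Iic m)) (hA : ∀ i : Fin (m + 1), A i ≤ a i ∧ a i ≤ A i + δ)
    (ha : ∀ l < m, |a (l + 1) - a l| ≤ t) (haM : ∀ k ≤ m, a k ≤ M)
    (hx : x ∈ Ico (s 0) (s (m + 1))) :
    lowerBracket m U A h M x ≤ stepFun m s a x ∧
      stepFun m s a x - lowerBracket m U A h M x ≤ δ + t * knotCover m U h x := by
  obtain ⟨k, hk, hxk⟩ := exists_mem_Ico_of_mem_Ico s hx
  have hwin : x ∈ Ico (U k) (U (k + 1) + h) :=
    ⟨(hU k hk.le).1.trans hxk.1, hxk.2.trans_le (hU (k + 1) hk).2⟩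
  rw [stepFun_eq hs a (Nat.lt_succ_iff.1 hk) hxk]
  exact ⟨(lowerBracket_le ⟨k, hk⟩ hwin).trans (hA ⟨k, hk⟩).1,
    sub_lowerBracket_le ht hδ hUmono ha (fun i => (hA i).2) ⟨k, hk⟩ (haM k (by omega)) hwin⟩

end LowerBracket

-- Capped at `K - 1` so that a knot at `1` still has an index in `Fin K`.
noncomputable def gridFloor (K : ℕ) (y : ℝ) : ℕ := min ⌊K * y⌋₊ (K - 1)

section GridFloor
variable {K : ℕ}

lemma gridFloor_lt (hK : 0 < K) (y : ℝ) : gridFloor K y < K :=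
  (min_le_right _ _).trans_lt (Nat.sub_lt hK one_pos)

lemma gridFloor_mono : Monotone (gridFloor K) := fun _ _ hy =>
  min_le_min_right _ (Nat.floor_le_floor (by gcongr))

@[simp] lemma gridFloor_zero : gridFloor K 0 = 0 := by simp [gridFloor]

lemma gridFloor_div_le {y : ℝ} (hy : 0 ≤ y) : (gridFloor K y : ℝ) / K ≤ y := by
  rcases K.eq_zero_or_pos with rfl | hK
  · simpa using hy
  rw [div_le_iff₀' (by positivity)]
  exact (Nat.cast_le.2 (min_le_left _ _)).trans (Nat.floor_le (by positivity))

lemma le_gridFloor_div_add (hK : 0 < K) {y : ℝ} (hy : y ≤ 1) :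
    y ≤ gridFloor K y / K + 1 / K := by
  rw [← add_div, le_div_iff₀' (by positivity)]
  rcases le_total ⌊K * y⌋₊ (K - 1) with hle | hle
  · rw [gridFloor, min_eq_left hle]
    exact (Nat.lt_floor_add_one _).le
  · rw [gridFloor, min_eq_right hle, Nat.cast_sub hK, Nat.cast_one, sub_add_cancel]
    exact mul_le_of_le_one_right (by positivity) hy

end GridFloor

noncomputable def gridKnots {m K : ℕ} (v : Fin m → Fin K) (l : ℕ) : ℝ :=
  if hl0 : l = 0 then 0 else if hl : l ≤ m then (v ⟨l - 1, by omega⟩ : ℕ) / K else 1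

lemma exists_gridKnots {m : ℕ} (hK : 0 < K) {s : ℕ → ℝ} (hs : MonotoneOn s (Iic (m + 1)))
    (hs0 : s 0 = 0) (hs1 : s (m + 1) = 1) :
    ∃ v : Fin m → Fin K, (∀ l ≤ m + 1, gridKnots v l ≤ s l ∧ s l ≤ gridKnots v l + 1 / K) ∧
      MonotoneOn (gridKnots v) (Iic m) := by
  set v : Fin m → Fin K := fun j => ⟨gridFloor K (s (j + 1)), gridFloor_lt hK _⟩
  have hv : ∀ l ≤ m, gridKnots v l = gridFloor K (s l) / K := by
    rintro (_ | l) hl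
    · simp [gridKnots, hs0]
    · simp [gridKnots, hl, v]
  have hs_mem : ∀ l ≤ m + 1, s l ∈ Icc 0 1 := fun l hl =>
    ⟨hs0 ▸ hs (by simp) (by simpa) l.zero_le, hs1 ▸ hs (by simpa) (by simp) hl⟩
  refine ⟨v, fun l hl => ?_, fun i hi j hj hij => ?_⟩
  · rcases hl.lt_or_eq with hl | rfl
    · rw [hv l (by omega)]
      exact ⟨gridFloor_div_le (hs_mem l hl.le).1, le_gridFloor_div_add hK (hs_mem l hl.le).2⟩
    · simp [gridKnots, hs1]
  · rw [hv i hi, hv j hj]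
    gcongr
    exact gridFloor_mono (hs (by simp at hi ⊢; omega) (by simp at hj ⊢; omega) hij)

def gridLevels {ι : Type*} {D : ℕ} (M δ : ℝ) (w : ι → Fin D) (i : ι) : ℝ := -M + (w i : ℕ) * δ

lemma exists_gridLevels {m : ℕ} {M δ : ℝ} (hδ : 0 < δ) {a : ℕ → ℝ} (ha : ∀ i ≤ m, |a i| ≤ M) :
    ∃ w : Fin (m + 1) → Fin (⌊2 * M / δ⌋₊ + 1),
      ∀ i, gridLevels M δ w i ≤ a i ∧ a i ≤ gridLevels M δ w i + δ := by
  have ha' : ∀ i : Fin (m + 1), 0 ≤ a i + M ∧ a i + M ≤ 2 * M := fun i => by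
    have := abs_le.1 (ha i (Nat.lt_succ_iff.1 i.2))
    constructor <;> linarith
  refine ⟨fun i => ⟨⌊(a i + M) / δ⌋₊, Nat.lt_succ_of_le (Nat.floor_le_floor ?_)⟩, fun i => ?_⟩
  · exact div_le_div_of_nonneg_right (ha' i).2 hδ.le
  · have hy : 0 ≤ (a i + M) / δ := div_nonneg (ha' i).1 hδ.le
    have hfloor := Nat.floor_le hy
    have hfloor' := Nat.lt_floor_add_one ((a i + M) / δ)
    rw [le_div_iff₀ hδ] at hfloor
    rw [div_lt_iff₀ hδ] at hfloor'
    simp only [gridLevels]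
    constructor <;> linarith

lemma abs_le_of_abs_succ_sub_le {m : ℕ} {a : ℕ → ℝ} {t : ℝ} (h0 : |a 0| ≤ t)
    (ha : ∀ l < m, |a (l + 1) - a l| ≤ t) {k : ℕ} (hk : k ≤ m) : |a k| ≤ (m + 1) * t := by
  have ht : 0 ≤ t := (abs_nonneg _).trans h0
  calc |a k| ≤ |a 0| + |a k - a 0| := by linarith [abs_sub_abs_le_abs_sub (a k) (a 0)]
    _ ≤ t + ∑ l ∈ Finset.Ico 0 k, t := by
        rw [← Real.dist_eq, dist_comm]
        gcongr
        refine (dist_le_Ico_sum_dist a k.zero_le).trans (Finset.sum_le_sum fun l hl => ?_)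
        rw [Real.dist_eq, abs_sub_comm]
        exact ha l ((Finset.mem_Ico.1 hl).2.trans_le hk)
    _ ≤ (m + 1) * t := by
        rw [Finset.sum_const, Nat.card_Ico, nsmul_eq_mul, Nat.sub_zero]
        nlinarith [(Nat.cast_le (α := ℝ)).2 hk]

lemma card_grid_le {m : ℕ} {t ε : ℝ} (ht : 0 < t) (hε0 : 0 < ε) (hε : ε ≤ 2 * m * t) :
    ((⌈2 * m * t / ε⌉₊ ^ m * (⌊2 * ((m + 1) * t) / (ε / 2)⌋₊ + 1) ^ (m + 1) : ℕ) : ℝ) ≤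
      2 * (4 * m * t / ε) ^ m * (4 * (m + 1) * t / ε + 3) ^ (m + 1) := by
  have hK : (⌈2 * m * t / ε⌉₊ : ℝ) ≤ 4 * m * t / ε := by
    have := Nat.ceil_le_two_mul (K := ℝ) (a := 2 * m * t / ε) (by rw [le_div_iff₀ hε0]; linarith)
    linarith [show 2 * (2 * m * t / ε) = 4 * m * t / ε by ring]
  have hD : ((⌊2 * ((m + 1) * t) / (ε / 2)⌋₊ : ℕ) : ℝ) + 1 ≤ 4 * (m + 1) * t / ε + 3 := by
    have := Nat.floor_le (a := 2 * ((m + 1) * t) / (ε / 2)) (by positivity)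
    linarith [show 2 * ((m + 1) * t) / (ε / 2) = 4 * (m + 1) * t / ε by field_simp; ring]
  push_cast
  calc _ ≤ (4 * m * t / ε) ^ m * (4 * (m + 1) * t / ε + 3) ^ (m + 1) := by gcongr
    _ ≤ _ := by
      linarith [show 0 ≤ (4 * m * t / ε) ^ m * (4 * (m + 1) * t / ε + 3) ^ (m + 1) by positivity]

theorem pc_one_sided_bracketing_general (m : ℕ) (t : ℝ) (ht : 0 < t)
    (ε : ℝ) (hε0 : 0 < ε) (hε : ε ≤ 2 * m * t) :
    ∃ (N : ℕ) (ℓ : Fin N → ℝ → ℝ),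
      (N : ℝ) ≤ 2 * (4 * m * t / ε) ^ m * (4 * (m + 1) * t / ε + 3) ^ (m + 1) ∧
      (∀ j, IntegrableOn (ℓ j) (Set.Icc (0 : ℝ) 1)) ∧
      ∀ f : ℝ → ℝ,
        (∃ a s : ℕ → ℝ, s 0 = 0 ∧ s (m + 1) = 1 ∧ (∀ j ≤ m, s j ≤ s (j + 1)) ∧
          |a 0| ≤ t ∧ (∀ j, 1 ≤ j → j ≤ m → |a j - a (j - 1)| ≤ t) ∧
          ∀ x ∈ Set.Ico (0 : ℝ) 1,
            f x = ∑ j ∈ Finset.range (m + 1), if s j ≤ x ∧ x < s (j + 1) then a j else 0) →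
        ∃ j : Fin N, (∀ x ∈ Set.Ico (0 : ℝ) 1, ℓ j x ≤ f x) ∧
          (∫ x in (0 : ℝ)..1, (f x - ℓ j x)) ≤ ε := by
  set K := ⌈2 * m * t / ε⌉₊
  set M := ((m : ℝ) + 1) * t
  have hKε : 2 * m * t / ε ≤ K := Nat.le_ceil _
  have hK : 0 < K := Nat.ceil_pos.2 (div_pos (by linarith) hε0)
  let ι := (Fin m → Fin K) × (Fin (m + 1) → Fin (⌊2 * M / (ε / 2)⌋₊ + 1))
  let ℓ : ι → ℝ → ℝ := fun p =>
    lowerBracket m (gridKnots p.1) (gridLevels M (ε / 2) p.2) (1 / K) M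
  let e := Fintype.equivFin ι
  refine ⟨Fintype.card ι, ℓ ∘ e.symm, ?_, fun _ => integrable_lowerBracket, ?_⟩
  · simpa [ι, Fintype.card_fun] using card_grid_le ht hε0 hε
  rintro f ⟨a, s, hs0, hs1, hs_succ, ha0, ha, hf⟩
  have hs := monotoneOn_Iic_of_le_succ hs_succ
  replace ha : ∀ l < m, |a (l + 1) - a l| ≤ t := fun l hl => by
    simpa using ha (l + 1) (by omega) (by omega)
  have haM : ∀ k ≤ m, |a k| ≤ M := fun k hk => abs_le_of_abs_succ_sub_le ha0 ha hk
  obtain ⟨v, hvs, hv⟩ := exists_gridKnots hK hs hs0 hs1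
  obtain ⟨w, hw⟩ := exists_gridLevels (half_pos hε0) haM
  have hbracket := fun x (hx : x ∈ Ico (0 : ℝ) 1) =>
    lowerBracket_le_stepFun_and_sub_le (M := M) ht.le (half_pos hε0).le hs hvs hv hw ha
      (fun k hk => (abs_le.1 (haM k hk)).2) (hs0 ▸ hs1 ▸ hx)
  refine ⟨e (v, w), fun x hx => by simpa [ℓ, hf x hx, stepFun] using (hbracket x hx).1, ?_⟩
  calc _ ≤ ε / 2 + t * (m * (1 / K)) := intervalIntegral_le_of_le_knotCover ht.le (by positivity)
        fun x hx => by simpa [ℓ, hf x hx, stepFun] using hbracket x hx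
    _ ≤ ε := by
      have : t * m / K ≤ ε / 2 := by
        rw [div_le_iff₀ (by positivity)]
        rw [div_le_iff₀ hε0] at hKε
        linarith
      rw [mul_one_div, ← mul_div_assoc]
      linarith

/-- One-sided bracketing of piecewise constant functions: the class of piecewise constant
functions on `[0,1]` with at most `m` jumps, starting value bounded by `t` and jump sizes
bounded by `t`, admits at level `ε ≤ 2mt` a one-sided `ε`-bracketing family of at most
`2 (4mt/ε)^m (4(m+1)t/ε + 3)^{m+1}` integrable functions. -/
theorem pc_one_sided_bracketing (m : ℕ) (hm : 1 ≤ m) (t : ℝ) (ht : 0 < t)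
    (ε : ℝ) (hε0 : 0 < ε) (hε : ε ≤ 2 * m * t) :
    ∃ (N : ℕ) (ℓ : Fin N → ℝ → ℝ),
      (N : ℝ) ≤ 2 * (4 * m * t / ε) ^ m * (4 * (m + 1) * t / ε + 3) ^ (m + 1) ∧
      (∀ j, IntegrableOn (ℓ j) (Set.Icc (0 : ℝ) 1)) ∧
      ∀ f : ℝ → ℝ,
        (∃ a s : ℕ → ℝ, s 0 = 0 ∧ s (m + 1) = 1 ∧ (∀ j ≤ m, s j ≤ s (j + 1)) ∧
          |a 0| ≤ t ∧ (∀ j, 1 ≤ j → j ≤ m → |a j - a (j - 1)| ≤ t) ∧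
          ∀ x ∈ Set.Ico (0 : ℝ) 1,
            f x = ∑ j ∈ Finset.range (m + 1), if s j ≤ x ∧ x < s (j + 1) then a j else 0) →
        ∃ j : Fin N, (∀ x ∈ Set.Ico (0 : ℝ) 1, ℓ j x ≤ f x) ∧
          (∫ x in (0 : ℝ)..1, (f x - ℓ j x)) ≤ ε :=
  pc_one_sided_bracketing_general m t ht ε hε0 hε
end
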